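/- arXiv:2408.13434 — 4 statements merged into one kernel-verified Lean document; each statement's English description precedes it below -/
import Mathlib

section
/- Let d ≥ 1 and c > 0. There exists a constant C > 0, depending only on d and c, with the following property: for every positive integer N, if R_1, …, R_N is a partition of S^d into N pairwise disjoint Borel measurable regions, each of σ-measure 1/N and each of Euclidean diameter at most c · N^{-1/d}, and x_i ∈ R_i for each i, then the spherical cap discrepancy of the point set {x_1, …, x_N} is at most C · N^{-1/d}. -/
open MeasureTheory Metric
open scoped ENNReal RealInnerProductSpace

/-- The rotation-invariant Borel probability measure on the unit sphere `S^d ⊂ ℝ^{d+1}`: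
the normalized `d`-dimensional Hausdorff measure restricted to the sphere. -/
noncomputable def sphereMeasure (d : ℕ) : Measure (EuclideanSpace ℝ (Fin (d + 1))) :=
  (μH[(d : ℝ)] (sphere (0 : EuclideanSpace ℝ (Fin (d + 1))) 1))⁻¹ •
    (μH[(d : ℝ)]).restrict (sphere (0 : EuclideanSpace ℝ (Fin (d + 1))) 1)

/-- The spherical cap on `S^d` cut out by the closed half-space `{x : ⟪x, v⟫ ≥ t}`. -/
def sphericalCap (d : ℕ) (v : EuclideanSpace ℝ (Fin (d + 1))) (t : ℝ) :
    Set (EuclideanSpace ℝ (Fin (d + 1))) :=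
  {x | x ∈ sphere (0 : EuclideanSpace ℝ (Fin (d + 1))) 1 ∧ t ≤ ⟪x, v⟫}

open scoped Classical in
/-- The spherical cap discrepancy of a finite subset `X` of `S^d`: the supremum over all
spherical caps `C` of `|card(X ∩ C)/card X − σ(C)|`. -/
noncomputable def capDiscrepancy (d : ℕ) (X : Finset (EuclideanSpace ℝ (Fin (d + 1)))) : ℝ :=
  sSup {r : ℝ | ∃ v : EuclideanSpace ℝ (Fin (d + 1)), ∃ t : ℝ, ‖v‖ = 1 ∧
    r = |((X.filter fun x => t ≤ ⟪x, v⟫).card : ℝ) / (X.card : ℝ) -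
          (sphereMeasure d (sphericalCap d v t)).toReal|}

/-!
Only the regions `R i` that meet both a cap and its complement contribute to its discrepancy,
each by at most `σ(R i) = 1/N`. Such a region has diameter `ε = c N^{-1/d}`, so it lies in the
band of polar angles within `2ε` of the boundary of the cap, and the discrepancy is at most the
measure of a band of angular width `4ε`. Shifting polar angles is `2`-Lipschitz on the bands
between angles `π/4` and `3π/4`, and it carries any band of width `δ` onto one of about `1/(2δ)`
disjoint bands of width `δ` there, so such a band has measure `O(2^d δ)`.
-/

open MeasureTheory InnerProductGeometry Set Real
open scoped Real Finset

section Partition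

variable {α ι : Type*} [MeasurableSpace α] (P : Measure α) [IsFiniteMeasure P] {H B : Set α}
  {a : ℝ}

lemma abs_ite_sub_measureReal_inter_le {R : Set α} (hPR : P.real R = a) {x : α} (hx : x ∈ R)
    [Decidable (x ∈ H)] (hB : (R ∩ H).Nonempty → (R \ H).Nonempty → R ⊆ B) :
    |(if x ∈ H then a else 0) - P.real (H ∩ R)| ≤ P.real (R ∩ B) := by
  by_cases hin : (R ∩ H).Nonempty
  · by_cases hout : (R \ H).Nonempty
    · rw [inter_eq_left.2 (hB hin hout), hPR, abs_le]
      have hle : P.real (H ∩ R) ≤ a := hPR ▸ measureReal_mono inter_subset_right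
      have hnonneg : 0 ≤ P.real (H ∩ R) := measureReal_nonneg
      split_ifs <;> constructor <;> linarith
    · have hRH : R ⊆ H := sdiff_eq_empty.1 (not_nonempty_iff_eq_empty.1 hout)
      rw [if_pos (hRH hx), inter_eq_right.2 hRH, hPR, sub_self, abs_zero]
      exact measureReal_nonneg
  · have hHR : H ∩ R = ∅ := by rw [inter_comm]; exact not_nonempty_iff_eq_empty.1 hin
    rw [if_neg fun h => hin ⟨x, hx, h⟩, hHR, measureReal_empty, sub_zero, abs_zero]
    exact measureReal_nonneg

lemma abs_card_filter_mul_sub_measureReal_le [Fintype ι] {R : ι → Set α}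
    (hRm : ∀ i, MeasurableSet (R i)) (hR : Pairwise (Function.onFun Disjoint R))
    (hPR : ∀ i, P.real (R i) = a) {x : ι → α} (hx : ∀ i, x i ∈ R i) (hH : MeasurableSet H)
    [DecidablePred fun i => x i ∈ H] (hBm : MeasurableSet B)
    (hB : ∀ i, (R i ∩ H).Nonempty → (R i \ H).Nonempty → R i ⊆ B) :
    |#{i | x i ∈ H} * a - P.real (H ∩ ⋃ i, R i)| ≤ P.real B := by
  have hcount : (#{i | x i ∈ H} : ℝ) * a = ∑ i, if x i ∈ H then a else 0 := by
    rw [Finset.sum_ite, Finset.sum_const, Finset.sum_const_zero, add_zero, nsmul_eq_mul]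
  have hdisj : ∀ S : Set α, Pairwise (Function.onFun Disjoint fun i => R i ∩ S) :=
    fun S i j hij => (hR hij).mono inter_subset_left inter_subset_left
  calc |#{i | x i ∈ H} * a - P.real (H ∩ ⋃ i, R i)|
      = |∑ i, ((if x i ∈ H then a else 0) - P.real (H ∩ R i))| := by
        rw [hcount, Finset.sum_sub_distrib, inter_iUnion]
        simp_rw [inter_comm H]
        rw [measureReal_iUnion_fintype (hdisj H) fun i => (hRm i).inter hH]
    _ ≤ ∑ i, |(if x i ∈ H then a else 0) - P.real (H ∩ R i)| := Finset.abs_sum_le_sum_abs _ _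
    _ ≤ ∑ i, P.real (R i ∩ B) :=
        Finset.sum_le_sum fun i _ => abs_ite_sub_measureReal_inter_le P (hPR i) (hx i) (hB i)
    _ = P.real ((⋃ i, R i) ∩ B) := by
        rw [iUnion_inter, measureReal_iUnion_fintype (hdisj B) fun i => (hRm i).inter hBm]
    _ ≤ P.real B := measureReal_mono inter_subset_right

end Partition

section PolarCoordinates

variable {E : Type*} [NormedAddCommGroup E] [InnerProductSpace ℝ E] {v x : E}

noncomputable def polarDirection (v x : E) : E := NormedSpace.normalize (x - ⟪x, v⟫ • v)

noncomputable def polarShift (v : E) (a : ℝ) (x : E) : E :=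
  cos (angle x v + a) • v + sin (angle x v + a) • polarDirection v x

def sphereBand (v : E) (α₁ α₂ : ℝ) : Set E :=
  {x | x ∈ sphere (0 : E) 1 ∧ angle x v ∈ Icc α₁ α₂}

lemma norm_sub_inner_smul_eq_sin_angle (hv : ‖v‖ = 1) (hx : ‖x‖ = 1) :
    ‖x - ⟪x, v⟫ • v‖ = sin (angle x v) := by
  have hsq : ‖x - ⟪x, v⟫ • v‖ ^ 2 = sin (angle x v) ^ 2 := by
    rw [sin_sq, ← inner_eq_cos_angle_of_norm_eq_one hx hv, norm_sub_sq_real,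
      real_inner_smul_right, norm_smul, hx, Real.norm_eq_abs, mul_pow, sq_abs, hv]
    ring
  exact (pow_left_inj₀ (norm_nonneg _) (sin_angle_nonneg x v) two_ne_zero).1 hsq

lemma inner_polarDirection_left (hv : ‖v‖ = 1) : ⟪polarDirection v x, v⟫ = 0 := by
  rw [polarDirection, NormedSpace.normalize, real_inner_smul_left, inner_sub_left,
    real_inner_smul_left, real_inner_self_eq_norm_sq, hv]
  ring

lemma norm_polarDirection (hv : ‖v‖ = 1) (hx : ‖x‖ = 1) (hsin : sin (angle x v) ≠ 0) :
    ‖polarDirection v x‖ = 1 := by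
  refine NormedSpace.norm_normalize fun h => hsin ?_
  rw [← norm_sub_inner_smul_eq_sin_angle hv hx, h, norm_zero]

lemma cos_smul_add_sin_smul_polarDirection (hv : ‖v‖ = 1) (hx : ‖x‖ = 1) :
    cos (angle x v) • v + sin (angle x v) • polarDirection v x = x := by
  rw [← inner_eq_cos_angle_of_norm_eq_one hx hv, ← norm_sub_inner_smul_eq_sin_angle hv hx,
    polarDirection, NormedSpace.norm_smul_normalize, add_sub_cancel]

variable {u u' : E} {θ θ' : ℝ}

lemma inner_cos_smul_add_sin_smul (hv : ‖v‖ = 1) (hu : ⟪u, v⟫ = 0) (hu' : ⟪u', v⟫ = 0) :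
    ⟪cos θ • v + sin θ • u, cos θ' • v + sin θ' • u'⟫ =
      cos θ * cos θ' + sin θ * sin θ' * ⟪u, u'⟫ := by
  have hu'' : ⟪v, u'⟫ = 0 := by rw [real_inner_comm]; exact hu'
  simp only [inner_add_left, inner_add_right, real_inner_smul_left, real_inner_smul_right, hu,
    hu'', real_inner_self_eq_norm_sq, hv]
  ring

lemma norm_cos_smul_add_sin_smul (hv : ‖v‖ = 1) (hu : ‖u‖ = 1) (huv : ⟪u, v⟫ = 0) :
    ‖cos θ • v + sin θ • u‖ = 1 := by
  have h := inner_cos_smul_add_sin_smul (θ := θ) (θ' := θ) hv huv huv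
  rw [real_inner_self_eq_norm_sq, real_inner_self_eq_norm_sq, hu] at h
  rw [← pow_eq_one_iff_of_nonneg (norm_nonneg _) two_ne_zero, h]
  linear_combination cos_sq_add_sin_sq θ

lemma inner_cos_smul_add_sin_smul_left (hv : ‖v‖ = 1) (huv : ⟪u, v⟫ = 0) :
    ⟪cos θ • v + sin θ • u, v⟫ = cos θ := by
  rw [inner_add_left, real_inner_smul_left, real_inner_smul_left, huv,
    real_inner_self_eq_norm_sq, hv]
  ring

lemma norm_cos_smul_add_sin_smul_sub_sq (hv : ‖v‖ = 1) (hu : ‖u‖ = 1) (hu' : ‖u'‖ = 1)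
    (huv : ⟪u, v⟫ = 0) (hu'v : ⟪u', v⟫ = 0) :
    ‖(cos θ • v + sin θ • u) - (cos θ' • v + sin θ' • u')‖ ^ 2 =
      2 - 2 * cos (θ - θ') + 2 * sin θ * sin θ' * (1 - ⟪u, u'⟫) := by
  rw [norm_sub_sq_real, norm_cos_smul_add_sin_smul hv hu huv,
    norm_cos_smul_add_sin_smul hv hu' hu'v, inner_cos_smul_add_sin_smul hv huv hu'v,
    cos_sub]
  ring

lemma angle_cos_smul_add_sin_smul (hv : ‖v‖ = 1) (hu : ‖u‖ = 1) (huv : ⟪u, v⟫ = 0)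
    (hθ : θ ∈ Icc 0 π) : angle (cos θ • v + sin θ • u) v = θ := by
  rw [angle, norm_cos_smul_add_sin_smul hv hu huv, hv, inner_cos_smul_add_sin_smul_left hv huv,
    mul_one, div_one, arccos_cos hθ.1 hθ.2]

lemma polarDirection_cos_smul_add_sin_smul (hv : ‖v‖ = 1) (hu : ‖u‖ = 1) (huv : ⟪u, v⟫ = 0)
    (hθ : 0 < sin θ) : polarDirection v (cos θ • v + sin θ • u) = u := by
  rw [polarDirection, inner_cos_smul_add_sin_smul_left hv huv, add_sub_cancel_left,
    NormedSpace.normalize_smul_of_pos hθ, NormedSpace.normalize_eq_self_of_norm_eq_one hu]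

lemma angle_eq_arccos_inner (hx : ‖x‖ = 1) (hv : ‖v‖ = 1) : angle x v = arccos ⟪x, v⟫ := by
  rw [angle, hx, hv, mul_one, div_one]

lemma sqrt_two_div_two_le_sin (hθ : θ ∈ Icc (π / 4) (3 * π / 4)) : √2 / 2 ≤ sin θ := by
  rw [← cos_pi_div_four, ← cos_sub_pi_div_two, ← cos_abs (θ - π / 2)]
  exact cos_le_cos_of_nonneg_of_le_pi (abs_nonneg _) (by linarith [pi_pos])
    (abs_le.2 ⟨by linarith [hθ.1], by linarith [hθ.2]⟩)

lemma lipschitzOnWith_polarShift (hv : ‖v‖ = 1) {β₁ β₂ : ℝ} (hβ₁ : π / 4 ≤ β₁)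
    (hβ₂ : β₂ ≤ 3 * π / 4) (a : ℝ) :
    LipschitzOnWith 2 (polarShift v a) (sphereBand v β₁ β₂) := by
  have polar : ∀ z ∈ sphereBand v β₁ β₂, ‖z‖ = 1 ∧ √2 / 2 ≤ sin (angle z v) ∧
      ‖polarDirection v z‖ = 1 := fun z ⟨hz, hθ⟩ => by
    have hz1 : ‖z‖ = 1 := mem_sphere_zero_iff_norm.1 hz
    have hsin := sqrt_two_div_two_le_sin ⟨hβ₁.trans hθ.1, hθ.2.trans hβ₂⟩
    exact ⟨hz1, hsin, norm_polarDirection hv hz1 ((lt_of_lt_of_le (by positivity) hsin).ne')⟩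
  refine LipschitzOnWith.of_dist_le_mul fun x hx y hy => ?_
  obtain ⟨hx1, hsx, hux⟩ := polar x hx
  obtain ⟨hy1, hsy, huy⟩ := polar y hy
  have hxy := norm_cos_smul_add_sin_smul_sub_sq hv hux huy
    (inner_polarDirection_left hv) (inner_polarDirection_left hv)
    (θ := angle x v) (θ' := angle y v)
  rw [cos_smul_add_sin_smul_polarDirection hv hx1, cos_smul_add_sin_smul_polarDirection hv hy1]
    at hxy
  have hshift := norm_cos_smul_add_sin_smul_sub_sq hv hux huy
    (inner_polarDirection_left hv) (inner_polarDirection_left hv)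
    (θ := angle x v + a) (θ' := angle y v + a)
  rw [add_sub_add_right_eq_sub] at hshift
  have hq : ⟪polarDirection v x, polarDirection v y⟫ ≤ 1 := by
    simpa [hux, huy] using real_inner_le_norm (polarDirection v x) (polarDirection v y)
  have hss : sin (angle x v + a) * sin (angle y v + a) ≤ 1 := by
    refine (le_abs_self _).trans ?_
    rw [abs_mul]
    exact mul_le_one₀ (abs_sin_le_one _) (abs_nonneg _) (abs_sin_le_one _)
  have hsxy : 1 / 2 ≤ sin (angle x v) * sin (angle y v) := by
    nlinarith [Real.sq_sqrt (zero_le_two (α := ℝ)), sqrt_nonneg 2]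
  rw [dist_eq_norm, dist_eq_norm, NNReal.coe_ofNat,
    ← pow_le_pow_iff_left₀ (norm_nonneg _) (by positivity) two_ne_zero, mul_pow,
    polarShift, polarShift, hshift, hxy]
  -- The shift keeps `θ - θ'` and `⟪u, u'⟫`; it only replaces `sin θ sin θ' ∈ [1/2, 1]` by a
  -- number at most `1`.
  nlinarith [cos_le_one (angle x v - angle y v), mul_nonneg (sub_nonneg.2 hq) (sub_nonneg.2 hss),
    mul_nonneg (sub_nonneg.2 hq) (sub_nonneg.2 hsxy)]

lemma sphereBand_diff_subset_image_polarShift (hv : ‖v‖ = 1) {α₁ α₂ β₁ : ℝ} (hβ₁ : 0 < β₁)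
    (hβ₂ : β₁ + (α₂ - α₁) < π) :
    sphereBand v α₁ α₂ \ {v, -v} ⊆ polarShift v (α₁ - β₁) '' sphereBand v β₁ (β₁ + (α₂ - α₁)) := by
  rintro x ⟨⟨hx, hθ⟩, hpole⟩
  have hx1 : ‖x‖ = 1 := mem_sphere_zero_iff_norm.1 hx
  have hsin : sin (angle x v) ≠ 0 := by
    rw [Ne, sin_eq_zero_iff_angle_eq_zero_or_angle_eq_pi]
    rintro (h | h)
    · exact hpole (Or.inl (eq_of_angle_eq_zero_of_norm_eq h (hx1.trans hv.symm)))
    · refine hpole (Or.inr (eq_of_angle_eq_zero_of_norm_eq ?_ (by rw [norm_neg, hx1, hv])))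
      rw [angle_neg_right, h, sub_self]
  have hu := norm_polarDirection hv hx1 hsin
  have huv : ⟪polarDirection v x, v⟫ = 0 := inner_polarDirection_left hv
  set β := angle x v - (α₁ - β₁)
  have hβ : β ∈ Icc 0 π := ⟨by linarith [hθ.1], by linarith [hθ.2]⟩
  have hsinβ : 0 < sin β := sin_pos_of_pos_of_lt_pi (by linarith [hθ.1])
    (by linarith [hθ.2])
  refine ⟨cos β • v + sin β • polarDirection v x,
    ⟨mem_sphere_zero_iff_norm.2 (norm_cos_smul_add_sin_smul hv hu huv), ?_⟩, ?_⟩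
  · rw [angle_cos_smul_add_sin_smul hv hu huv hβ]
    exact ⟨by linarith [hθ.1], by linarith [hθ.2]⟩
  · rw [polarShift, angle_cos_smul_add_sin_smul hv hu huv hβ,
      polarDirection_cos_smul_add_sin_smul hv hu huv hsinβ, sub_add_cancel]
    exact cos_smul_add_sin_smul_polarDirection hv hx1

lemma angle_le_pi_div_two_mul_norm_sub {x y : E} (hx : ‖x‖ = 1) (hy : ‖y‖ = 1) :
    angle x y ≤ π / 2 * ‖x - y‖ := by
  have hchord : ‖x - y‖ = 2 * sin (angle x y / 2) := by
    have hsq : ‖x - y‖ ^ 2 = (2 * sin (angle x y / 2)) ^ 2 := by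
      have h := cos_sq' (angle x y / 2)
      rw [norm_sub_sq_real, hx, hy, inner_eq_cos_angle_of_norm_eq_one hx hy,
        ← mul_div_cancel₀ (angle x y) two_ne_zero, cos_two_mul, mul_div_cancel_left₀ _ two_ne_zero]
      linear_combination (-4) * h
    refine (pow_left_inj₀ (norm_nonneg _) ?_ two_ne_zero).1 hsq
    exact mul_nonneg zero_le_two (sin_nonneg_of_nonneg_of_le_pi
      (by linarith [angle_nonneg x y]) (by linarith [angle_le_pi x y, pi_pos]))
  have hsin := mul_le_sin (x := angle x y / 2) (by linarith [angle_nonneg x y])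
    (by linarith [angle_le_pi x y])
  rw [hchord]
  have hπ := pi_pos
  field_simp at hsin ⊢
  linarith

lemma subset_sphereBand_of_diam_le {R : Set E} {ε t : ℝ} (hv : ‖v‖ = 1)
    (hR : R ⊆ sphere (0 : E) 1) (hdiam : diam R ≤ ε)
    (hin : (R ∩ {z | t ≤ ⟪z, v⟫}).Nonempty) (hout : (R \ {z | t ≤ ⟪z, v⟫}).Nonempty) :
    R ⊆ sphereBand v (arccos t - 2 * ε) (arccos t + 2 * ε) := by
  obtain ⟨y, hy, hyt⟩ := hin
  obtain ⟨w, hw, hwt⟩ := hout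
  have hunit : ∀ z ∈ R, ‖z‖ = 1 := fun z hz => mem_sphere_zero_iff_norm.1 (hR hz)
  have hclose : ∀ z ∈ R, ∀ z' ∈ R, angle z z' ≤ 2 * ε := fun z hz z' hz' => by
    have hdist : ‖z - z'‖ ≤ ε :=
      (dist_eq_norm z z' ▸ dist_le_diam_of_mem (isBounded_sphere.subset hR) hz hz').trans hdiam
    have hε : 0 ≤ ε := (norm_nonneg _).trans hdist
    calc angle z z' ≤ π / 2 * ‖z - z'‖ :=
          angle_le_pi_div_two_mul_norm_sub (hunit z hz) (hunit z' hz')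
      _ ≤ π / 2 * ε := by gcongr
      _ ≤ 2 * ε := by nlinarith [pi_lt_four]
  have hyθ : angle y v ≤ arccos t := by
    rw [angle_eq_arccos_inner (hunit y hy) hv]
    exact antitone_arccos hyt
  have hwθ : arccos t ≤ angle w v := by
    rw [angle_eq_arccos_inner (hunit w hw) hv]
    exact antitone_arccos (le_of_lt (not_le.1 hwt))
  intro z hz
  refine ⟨hR hz, ?_, ?_⟩
  · linarith [angle_le_angle_add_angle w z v, hclose w hw z hz]
  · linarith [angle_le_angle_add_angle z y v, hclose z hz y hy]

end PolarCoordinates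

section HausdorffMeasure

variable {E : Type*} [NormedAddCommGroup E] [InnerProductSpace ℝ E] [MeasurableSpace E]
  [BorelSpace E] {v : E} {s : ℝ}

lemma measurableSet_sphereBand (α₁ α₂ : ℝ) : MeasurableSet (sphereBand v α₁ α₂) := by
  refine isClosed_sphere.measurableSet.inter (measurableSet_Icc.preimage ?_)
  unfold angle
  fun_prop

lemma hausdorffMeasure_sphereBand_le (hs : 0 < s) (hv : ‖v‖ = 1) {α₁ α₂ β₁ : ℝ}
    (hβ₁ : π / 4 ≤ β₁) (hβ₂ : β₁ + (α₂ - α₁) ≤ 3 * π / 4) :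
    μH[s] (sphereBand v α₁ α₂) ≤ 2 ^ s * μH[s] (sphereBand v β₁ (β₁ + (α₂ - α₁))) := by
  have := Measure.nullSingletonClass_hausdorff E hs
  have hπ := pi_pos
  calc μH[s] (sphereBand v α₁ α₂)
      ≤ μH[s] ({v, -v} ∪ polarShift v (α₁ - β₁) '' sphereBand v β₁ (β₁ + (α₂ - α₁))) :=
        measure_mono (sdiff_subset_iff.1
          (sphereBand_diff_subset_image_polarShift hv (by linarith) (by linarith)))
    _ ≤ μH[s] {v, -v} + μH[s] (polarShift v (α₁ - β₁) '' sphereBand v β₁ (β₁ + (α₂ - α₁))) :=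
        measure_union_le _ _
    _ = μH[s] (polarShift v (α₁ - β₁) '' sphereBand v β₁ (β₁ + (α₂ - α₁))) := by
        rw [(toFinite {v, -v}).measure_zero, zero_add]
    _ ≤ 2 ^ s * μH[s] (sphereBand v β₁ (β₁ + (α₂ - α₁))) := by
        simpa using (lipschitzOnWith_polarShift hv hβ₁ hβ₂ _).hausdorffMeasure_image_le hs.le

lemma natCast_mul_hausdorffMeasure_sphereBand_le (hs : 0 < s) (hv : ‖v‖ = 1) {α δ : ℝ}
    (hδ : 0 < δ) {n : ℕ} (hn : 2 * δ * n ≤ 1) :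
    n * μH[s] (sphereBand v α (α + δ)) ≤ 2 ^ s * μH[s] (sphere (0 : E) 1) := by
  set B : ℕ → Set E := fun i => sphereBand v (π / 4 + 2 * δ * i) (π / 4 + 2 * δ * i + δ)
  have hB : ∀ i ∈ Finset.range n, μH[s] (sphereBand v α (α + δ)) ≤ 2 ^ s * μH[s] (B i) := by
    intro i hi
    have hin : (i : ℝ) + 1 ≤ n := by exact_mod_cast Finset.mem_range.1 hi
    simpa [B] using hausdorffMeasure_sphereBand_le hs hv (α₁ := α) (α₂ := α + δ)
      (β₁ := π / 4 + 2 * δ * i) (by nlinarith) (by nlinarith [pi_gt_three])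
  have hdisj : Pairwise (Function.onFun Disjoint B) := by
    intro i j hij
    wlog h : i < j generalizing i j
    · exact (this hij.symm (lt_of_le_of_ne (not_lt.1 h) hij.symm)).symm
    rw [Function.onFun, Set.disjoint_left]
    rintro x ⟨-, -, hxi⟩ ⟨-, hxj, -⟩
    have hij' : (i : ℝ) + 1 ≤ j := by exact_mod_cast h
    nlinarith
  calc n * μH[s] (sphereBand v α (α + δ))
      = ∑ _i ∈ Finset.range n, μH[s] (sphereBand v α (α + δ)) := by simp
    _ ≤ ∑ i ∈ Finset.range n, 2 ^ s * μH[s] (B i) := Finset.sum_le_sum hB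
    _ = 2 ^ s * μH[s] (⋃ i ∈ Finset.range n, B i) := by
        rw [← Finset.mul_sum, measure_biUnion_finset (hdisj.set_pairwise _)
          fun i _ => measurableSet_sphereBand _ _]
    _ ≤ 2 ^ s * μH[s] (sphere (0 : E) 1) := by
        gcongr
        exact iUnion₂_subset fun i _ x hx => hx.1

end HausdorffMeasure

section SphereMeasure

variable {d : ℕ}

lemma sphereMeasure_apply_of_subset_sphere {A : Set (EuclideanSpace ℝ (Fin (d + 1)))}
    (hA : A ⊆ sphere 0 1) :
    sphereMeasure d A = (μH[(d : ℝ)] (sphere (0 : EuclideanSpace ℝ (Fin (d + 1))) 1))⁻¹ *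
      μH[(d : ℝ)] A := by
  rw [sphereMeasure, Measure.smul_apply, Measure.restrict_apply' isClosed_sphere.measurableSet,
    inter_eq_left.2 hA, smul_eq_mul]

instance : IsZeroOrProbabilityMeasure (sphereMeasure d) := by
  refine ⟨?_⟩
  rw [sphereMeasure, Measure.smul_apply, Measure.restrict_apply_univ, smul_eq_mul]
  by_cases h0 : μH[(d : ℝ)] (sphere (0 : EuclideanSpace ℝ (Fin (d + 1))) 1) = 0
  · simp [h0]
  by_cases htop : μH[(d : ℝ)] (sphere (0 : EuclideanSpace ℝ (Fin (d + 1))) 1) = ⊤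
  · simp [htop]
  exact Or.inr (ENNReal.inv_mul_cancel h0 htop)

lemma natCast_mul_sphereMeasure_sphereBand_le (hd : 1 ≤ d) {v : EuclideanSpace ℝ (Fin (d + 1))}
    (hv : ‖v‖ = 1) {α δ : ℝ} (hδ : 0 < δ) {n : ℕ} (hn : 2 * δ * n ≤ 1) :
    n * sphereMeasure d (sphereBand v α (α + δ)) ≤ 2 ^ d := by
  set S := μH[(d : ℝ)] (sphere (0 : EuclideanSpace ℝ (Fin (d + 1))) 1)
  have hband := natCast_mul_hausdorffMeasure_sphereBand_le (by exact_mod_cast hd) hv hδ hn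
    (s := d) (α := α)
  rw [ENNReal.rpow_natCast] at hband
  calc n * sphereMeasure d (sphereBand v α (α + δ))
      = S⁻¹ * (n * μH[(d : ℝ)] (sphereBand v α (α + δ))) := by
        rw [sphereMeasure_apply_of_subset_sphere fun x hx => hx.1]
        ring
    _ ≤ S⁻¹ * (2 ^ d * S) := by gcongr
    _ = 2 ^ d * (S⁻¹ * S) := by ring
    _ ≤ 2 ^ d := mul_le_of_le_one_right' (ENNReal.inv_mul_le_one S)

lemma sphereMeasure_real_sphereBand_le (hd : 1 ≤ d) {v : EuclideanSpace ℝ (Fin (d + 1))}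
    (hv : ‖v‖ = 1) {α₁ α₂ : ℝ} (hα : α₁ < α₂) :
    (sphereMeasure d).real (sphereBand v α₁ α₂) ≤ 4 * 2 ^ d * (α₂ - α₁) := by
  obtain ⟨δ, hδ, rfl⟩ : ∃ δ, 0 < δ ∧ α₂ = α₁ + δ := ⟨α₂ - α₁, by linarith, by ring⟩
  rw [add_sub_cancel_left]
  have h2d : (1 : ℝ) ≤ 2 ^ d := one_le_pow₀ one_le_two
  rcases le_or_gt (1 / 4) δ with hδ' | hδ'
  · calc (sphereMeasure d).real (sphereBand v α₁ (α₁ + δ)) ≤ 1 := measureReal_le_one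
      _ ≤ 4 * 2 ^ d * δ := by nlinarith
  -- `n` disjoint translates of a band of width `δ` fit into the sphere, for `n ≈ 1 / (2δ)`.
  set n := ⌊1 / (2 * δ)⌋₊
  have hn : 2 * δ * n ≤ 1 := by
    have := Nat.floor_le (a := 1 / (2 * δ)) (by positivity)
    rwa [le_div_iff₀ (by positivity), mul_comm] at this
  have hn' : 1 < 4 * δ * n := by
    have := Nat.sub_one_lt_floor (1 / (2 * δ))
    rw [sub_lt_iff_lt_add, div_lt_iff₀ (by positivity)] at this
    nlinarith
  have hband : n * (sphereMeasure d).real (sphereBand v α₁ (α₁ + δ)) ≤ 2 ^ d := by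
    have := natCast_mul_sphereMeasure_sphereBand_le hd hv (α := α₁) hδ hn
    simpa [measureReal_def] using ENNReal.toReal_mono (by simp) this
  nlinarith [measureReal_nonneg (μ := sphereMeasure d) (s := sphereBand v α₁ (α₁ + δ))]

end SphereMeasure

open scoped Classical in
lemma capDiscrepancy_image_le {d : ℕ} {ι : Type*} [Fintype ι]
    {x : ι → EuclideanSpace ℝ (Fin (d + 1))} (hx : Function.Injective x) {b : ℝ} (hb : 0 ≤ b)
    (h : ∀ v t, ‖v‖ = 1 → |#{i | t ≤ ⟪x i, v⟫} / (Fintype.card ι : ℝ) -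
      (sphereMeasure d).real (sphericalCap d v t)| ≤ b) :
    capDiscrepancy d (Finset.univ.image x) ≤ b := by
  refine Real.sSup_le ?_ hb
  rintro _ ⟨v, t, hv, rfl⟩
  rw [Finset.filter_image, Finset.card_image_of_injective _ hx,
    Finset.card_image_of_injective _ hx, Finset.card_univ]
  exact h v t hv

open scoped Classical

/-- Point sets drawn from a diameter-bounded equal-area partition of `S^d` have spherical cap
discrepancy at most `C · N^{-1/d}`, with `C` depending only on `d` and the diameter constant. -/
theorem capDiscrepancy_le_of_diameter_bounded_equal_area_partition
    (d : ℕ) (hd : 1 ≤ d) (c : ℝ) (hc : 0 < c) :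
    ∃ C : ℝ, 0 < C ∧ ∀ N : ℕ, 0 < N →
      ∀ R : Fin N → Set (EuclideanSpace ℝ (Fin (d + 1))),
        (∀ i, MeasurableSet (R i)) →
        Pairwise (Function.onFun Disjoint R) →
        (⋃ i, R i) = sphere (0 : EuclideanSpace ℝ (Fin (d + 1))) 1 →
        (∀ i, sphereMeasure d (R i) = 1 / (N : ℝ≥0∞)) →
        (∀ i, Metric.diam (R i) ≤ c * (N : ℝ) ^ (-(1 : ℝ) / d)) →
        ∀ x : Fin N → EuclideanSpace ℝ (Fin (d + 1)),
          (∀ i, x i ∈ R i) →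
          capDiscrepancy d (Finset.univ.image x) ≤ C * (N : ℝ) ^ (-(1 : ℝ) / d) := by
  refine ⟨16 * 2 ^ d * c, by positivity, fun N hN R hRm hR hcover hσR hdiam x hx => ?_⟩
  set ε := c * (N : ℝ) ^ (-(1 : ℝ) / d)
  have hε : 0 < ε := by positivity
  have hσR' : ∀ i, (sphereMeasure d).real (R i) = 1 / N := fun i => by
    simp [measureReal_def, hσR i]
  have hinj : Function.Injective x := fun i j hij => by
    by_contra hne
    exact disjoint_left.1 (hR hne) (hx i) (hij ▸ hx j)
  refine capDiscrepancy_image_le hinj (by positivity) fun v t hv => ?_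
  have hcap : sphericalCap d v t = {z | t ≤ ⟪z, v⟫} ∩ ⋃ i, R i := by
    rw [hcover, inter_comm]
    rfl
  have hH : MeasurableSet {z : EuclideanSpace ℝ (Fin (d + 1)) | t ≤ ⟪z, v⟫} :=
    measurableSet_le measurable_const (measurable_id.inner measurable_const)
  calc |#{i | t ≤ ⟪x i, v⟫} / (Fintype.card (Fin N) : ℝ) -
        (sphereMeasure d).real (sphericalCap d v t)|
      = |#{i | x i ∈ {z | t ≤ ⟪z, v⟫}} * (1 / N) -
          (sphereMeasure d).real ({z | t ≤ ⟪z, v⟫} ∩ ⋃ i, R i)| := by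
        rw [hcap, Fintype.card_fin, ← div_eq_mul_one_div]
        rfl
    _ ≤ (sphereMeasure d).real (sphereBand v (arccos t - 2 * ε) (arccos t + 2 * ε)) :=
        abs_card_filter_mul_sub_measureReal_le _ hRm hR hσR' hx hH (measurableSet_sphereBand _ _)
          fun i => subset_sphereBand_of_diam_le hv (hcover ▸ subset_iUnion R i) (hdiam i)
    _ ≤ 4 * 2 ^ d * (arccos t + 2 * ε - (arccos t - 2 * ε)) :=
        sphereMeasure_real_sphereBand_le hd hv (by linarith)
    _ = 16 * 2 ^ d * c * (N : ℝ) ^ (-(1 : ℝ) / d) := by ring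
end

section
/- Let d ≥ 1 and c > 0. There exists a constant K > 0, depending only on d and c, such that for every positive integer N the following holds: if R_1, …, R_N is a partition of S^d into N pairwise disjoint Borel measurable regions, each of σ-measure 1/N and each of Euclidean diameter at most c · N^{-1/d}, then for every spherical cap C ⊂ S^d, the number of indices i such that R_i intersects both C and the complement of C in S^d is at most K · N^{(d-1)/d}. -/
open MeasureTheory Metric
open scoped ENNReal RealInnerProductSpace

open scoped Classical

/-!
A region meeting both the cap and its complement has diameter at most `ε = c N^{-1/d}`, so it lies
within `2ε` of a point of the boundary `(d-1)`-sphere `{x ∈ S^d | ⟪x, v⟫ = t}`. A maximal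
`ε`-separated subset of these points has `O(ε^{1-d})` elements: projected to the hyperplane `v^⊥`
they lie on a sphere of radius `≤ 1`, so the disjoint `ε/2`-balls around them fill an annulus of
width `ε` in dimension `d`. The `3ε`-balls around this subset cover every boundary region. A ball
of radius `r` centred on `S^d` has `σ`-measure `O(r^d)`, being covered by the image of a
`d`-dimensional ball of radius `r` under a `2`-Lipschitz graph map over the tangent space. Since the
regions are disjoint of measure `1/N`, their number is `O(N ε^{1-d} ε^d) = O(N^{(d-1)/d})`.
-/

open Module
open scoped NNReal

open Real in
theorem mul_add_sqrt_mul_sqrt_le {a b t : ℝ} (hb : -1 ≤ b) (hbt : b ≤ t) (hta : t ≤ a)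
    (ha : a ≤ 1) :
    a * b + √(1 - a ^ 2) * √(1 - b ^ 2) ≤ a * t + √(1 - a ^ 2) * √(1 - t ^ 2) := by
  -- with `a = cos α`, `t = cos τ`, `b = cos β` and `α ≤ τ ≤ β`, this is `cos (β - α) ≤ cos (τ - α)`
  have key : cos (arccos b - arccos a) ≤ cos (arccos t - arccos a) :=
    cos_le_cos_of_nonneg_of_le_pi (sub_nonneg.2 (arccos_le_arccos hta))
      (by linarith [arccos_le_pi b, arccos_nonneg a]) (by linarith [arccos_le_arccos hbt])
  rwa [cos_sub, cos_sub, cos_arccos (by linarith) ha, cos_arccos hb (by linarith),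
    cos_arccos (by linarith) (by linarith), sin_arccos, sin_arccos, sin_arccos,
    mul_comm b, mul_comm t, mul_comm √(1 - b ^ 2), mul_comm √(1 - t ^ 2)] at key

theorem abs_sqrt_one_sub_sq_sub_le {a b : ℝ} (ha₀ : 0 ≤ a) (ha : a ≤ 1 / 2) (hb₀ : 0 ≤ b)
    (hb : b ≤ 1 / 2) : |√(1 - a ^ 2) - √(1 - b ^ 2)| ≤ |a - b| := by
  set A := √(1 - a ^ 2)
  set B := √(1 - b ^ 2)
  have hA : A ^ 2 = 1 - a ^ 2 := Real.sq_sqrt (by nlinarith)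
  have hB : B ^ 2 = 1 - b ^ 2 := Real.sq_sqrt (by nlinarith)
  have haA : a ≤ A := Real.le_sqrt_of_sq_le (by nlinarith)
  have hbB : b ≤ B := Real.le_sqrt_of_sq_le (by nlinarith)
  have hAB : 0 < (A + B) ^ 2 := by
    have : 0 < A := Real.sqrt_pos.2 (by nlinarith)
    positivity
  rw [← sq_le_sq]
  refine le_of_mul_le_mul_right ?_ hAB
  calc (A - B) ^ 2 * (A + B) ^ 2 = (a - b) ^ 2 * (a + b) ^ 2 := by
        rw [← mul_pow, ← mul_pow]; linear_combination (A ^ 2 - B ^ 2 + b ^ 2 - a ^ 2) * (hA - hB)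
    _ ≤ (a - b) ^ 2 * (A + B) ^ 2 := by gcongr

theorem Real.mul_rpow_neg_one_div {x : ℝ} (hx : 0 < x) {d : ℕ} (hd : d ≠ 0) :
    x * x ^ (-(1 : ℝ) / d) = x ^ (((d : ℝ) - 1) / d) := by
  have hd' : (d : ℝ) ≠ 0 := by exact_mod_cast hd
  rw [show ((d : ℝ) - 1) / d = 1 + -(1 : ℝ) / d by field_simp; ring, Real.rpow_add hx,
    Real.rpow_one]

theorem le_pow_mul_rpow_of_one_lt_mul_rpow {x b : ℝ} {d : ℕ} (hd : d ≠ 0) (hx : 1 ≤ x)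
    (h : 1 < b * x ^ (-(1 : ℝ) / d)) : x ≤ b ^ d * x ^ (((d : ℝ) - 1) / d) := by
  have hx₀ : 0 < x := by linarith
  have hpow : (x ^ (-(1 : ℝ) / d)) ^ d = x⁻¹ := by
    rw [← Real.rpow_natCast, ← Real.rpow_mul hx₀.le, div_mul_cancel₀ _ (by exact_mod_cast hd),
      Real.rpow_neg_one]
  have hlt : 1 < b ^ d * x⁻¹ := by
    simpa [mul_pow, hpow] using pow_lt_pow_left₀ h zero_le_one hd
  have hbx : x ≤ b ^ d := by
    rw [← div_eq_mul_inv, one_lt_div hx₀] at hlt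
    exact hlt.le
  calc x ≤ b ^ d := hbx
    _ ≤ b ^ d * x ^ (((d : ℝ) - 1) / d) :=
      le_mul_of_one_le_right (by linarith) (Real.one_le_rpow hx <| div_nonneg
        (sub_nonneg.2 (by exact_mod_cast Nat.one_le_iff_ne_zero.2 hd)) (Nat.cast_nonneg d))

theorem Metric.exists_subset_isSeparated_isCover {X : Type*} [PseudoEMetricSpace X]
    (A : Finset X) (δ : ℝ≥0) :
    ∃ C ⊆ A, IsSeparated δ (C : Set X) ∧ IsCover δ (A : Set X) C := by
  have hA : packingNumber δ (A : Set X) ≠ ⊤ :=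
    ne_top_of_le_ne_top A.finite_toSet.encard_lt_top.ne (packingNumber_le_encard_self _)
  have hfin : (maximalSeparatedSet δ (A : Set X)).Finite :=
    A.finite_toSet.subset maximalSeparatedSet_subset
  refine ⟨hfin.toFinset, ?_, ?_, ?_⟩
  · simpa [← Finset.coe_subset] using maximalSeparatedSet_subset
  · simpa using isSeparated_maximalSeparatedSet
  · simpa using isCover_maximalSeparatedSet hA

theorem card_mul_measure_ball_le_of_isSeparated {E : Type*} [NormedAddCommGroup E]
    [NormedSpace ℝ E] [MeasurableSpace E] [BorelSpace E] (μ : Measure E) [μ.IsAddHaarMeasure]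
    (C : Finset E) {ρ : ℝ} {δ : ℝ≥0} (hC : ↑C ⊆ sphere (0 : E) ρ)
    (hsep : IsSeparated δ (C : Set E)) :
    C.card * μ (ball 0 (δ / 2)) ≤
      μ (closedBall 0 (ρ + δ / 2) \ ball 0 (max (ρ - δ / 2) 0)) := by
  have hdisj : (C : Set E).PairwiseDisjoint (ball · (δ / 2)) := fun x hx y hy hxy =>
    ball_disjoint_ball <| by
      have : (δ : ℝ≥0∞) < edist x y := hsep hx hy hxy
      rw [edist_dist, ← ENNReal.ofReal_coe_nnreal,
        ENNReal.ofReal_lt_ofReal_iff (dist_pos.2 hxy)] at this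
      linarith
  have hsub : ⋃ x ∈ C, ball x (δ / 2) ⊆ closedBall 0 (ρ + δ / 2) \ ball 0 (max (ρ - δ / 2) 0) := by
    simp only [Set.iUnion_subset_iff]
    intro x hx z hz
    have hxρ : ‖x‖ = ρ := by simpa using hC hx
    rw [mem_ball, dist_eq_norm] at hz
    have h₁ := norm_le_norm_add_norm_sub' z x
    have h₂ := norm_sub_norm_le x z
    rw [norm_sub_rev] at h₂
    refine ⟨by rw [mem_closedBall_zero_iff]; linarith, ?_⟩
    rw [mem_ball_zero_iff, not_lt]
    exact max_le (by linarith) (norm_nonneg z)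
  calc (C.card : ℝ≥0∞) * μ (ball 0 (δ / 2)) = ∑ x ∈ C, μ (ball x (δ / 2)) := by
        simp [Measure.addHaar_ball_center]
    _ = μ (⋃ x ∈ C, ball x (δ / 2)) :=
        (measure_biUnion_finset hdisj fun _ _ => measurableSet_ball).symm
    _ ≤ _ := measure_mono hsub

theorem card_mul_pow_le_of_isSeparated {E : Type*} [NormedAddCommGroup E] [NormedSpace ℝ E]
    [FiniteDimensional ℝ E] [Nontrivial E] (C : Finset E) {ρ : ℝ} {δ : ℝ≥0} (hρ : 0 ≤ ρ)
    (hC : ↑C ⊆ sphere (0 : E) ρ) (hsep : IsSeparated δ (C : Set E)) :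
    C.card * ((δ : ℝ) / 2) ^ finrank ℝ E ≤
      finrank ℝ E * (ρ + δ / 2) ^ (finrank ℝ E - 1) * δ := by
  borelize E
  set n := finrank ℝ E
  set μ : Measure E := Measure.addHaar
  set r : ℝ := δ / 2 with hr_def
  set m : ℝ := max (ρ - r) 0
  have hr : 0 ≤ r := by positivity
  have hm : 0 ≤ m := le_max_right _ _
  have hmR : m ≤ ρ + r := max_le (by linarith) (by linarith)
  have hvol := card_mul_measure_ball_le_of_isSeparated μ C hC hsep
  have hB := (measure_ball_pos μ (0 : E) one_pos).ne'
  have hB' := (measure_ball_lt_top (μ := μ) (x := (0 : E)) (r := 1)).ne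
  rw [measure_sdiff (ball_subset_closedBall.trans (closedBall_subset_closedBall hmR))
      measurableSet_ball.nullMeasurableSet measure_ball_lt_top.ne,
    Measure.addHaar_ball μ 0 hr, Measure.addHaar_closedBall μ 0 (by linarith),
    Measure.addHaar_ball μ 0 hm, ← ENNReal.sub_mul (fun _ _ => hB'), ← mul_assoc,
    ENNReal.mul_le_mul_iff_left hB hB', ← ENNReal.ofReal_natCast,
    ← ENNReal.ofReal_mul (by positivity), ← ENNReal.ofReal_sub _ (by positivity),
    ENNReal.ofReal_le_ofReal_iff (sub_nonneg.2 (pow_le_pow_left₀ hm hmR n))] at hvol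
  have hpow := abs_pow_sub_pow_le (ρ + r) m n
  rw [abs_of_nonneg (sub_nonneg.2 (pow_le_pow_left₀ hm hmR n)), abs_of_nonneg (by linarith),
    abs_of_nonneg (by linarith), abs_of_nonneg hm, max_eq_left (by linarith)] at hpow
  have hgap : ρ + r - m ≤ δ := by linarith [le_max_left (ρ - r) 0, hr_def]
  calc _ ≤ _ := hvol
    _ ≤ (ρ + r - m) * n * (ρ + r) ^ (n - 1) := hpow
    _ ≤ δ * n * (ρ + r) ^ (n - 1) := by gcongr
    _ = _ := by ring

theorem MeasureTheory.card_mul_le_sum_measure {α ι κ : Type*} [MeasurableSpace α]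
    {μ : Measure α} {R : ι → Set α} (hR : ∀ i, MeasurableSet (R i))
    (hdisj : Pairwise (Function.onFun Disjoint R)) {m : ℝ≥0∞} (hm : ∀ i, μ (R i) = m) {F : Finset ι}
    {C : Finset κ} {B : κ → Set α} (hsub : ⋃ i ∈ F, R i ⊆ ⋃ j ∈ C, B j) :
    F.card * m ≤ ∑ j ∈ C, μ (B j) :=
  calc F.card * m = ∑ i ∈ F, μ (R i) := by simp [hm]
    _ = μ (⋃ i ∈ F, R i) := (measure_biUnion_finset (hdisj.set_pairwise _) fun i _ => hR i).symm
    _ ≤ μ (⋃ j ∈ C, B j) := measure_mono hsub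
    _ ≤ ∑ j ∈ C, μ (B j) := measure_biUnion_finset_le C B

section InnerProductSpace

variable {E : Type*} [NormedAddCommGroup E] [InnerProductSpace ℝ E]

def capBoundary (v : E) (t : ℝ) : Set E := {x | x ∈ sphere (0 : E) 1 ∧ ⟪x, v⟫ = t}

theorem norm_sub_smul_of_mem_capBoundary {v x : E} {t : ℝ} (hv : ‖v‖ = 1)
    (hx : x ∈ capBoundary v t) : ‖x - t • v‖ = √(1 - t ^ 2) := by
  obtain ⟨hx1, hxt⟩ := hx
  rw [mem_sphere_zero_iff_norm] at hx1
  rw [← Real.sqrt_sq (norm_nonneg _), norm_sub_sq_real, real_inner_smul_right, hxt, norm_smul,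
    hx1, hv, Real.norm_eq_abs, mul_one, sq_abs]
  ring_nf

theorem card_mul_pow_le_of_isSeparated_capBoundary {n : ℕ} [Fact (finrank ℝ E = n + 1)]
    (hn : 1 ≤ n) {v : E} (hv : ‖v‖ = 1) {t : ℝ} {δ : ℝ≥0} (C : Finset E)
    (hC : ↑C ⊆ capBoundary v t) (hsep : IsSeparated δ (C : Set E)) :
    C.card * ((δ : ℝ) / 2) ^ n ≤ n * (√(1 - t ^ 2) + δ / 2) ^ (n - 1) * δ := by
  have : FiniteDimensional ℝ E := .of_fact_finrank_eq_succ n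
  set W := (ℝ ∙ v)ᗮ
  have hv₀ : v ≠ 0 := by rintro rfl; simp at hv
  have hW : finrank ℝ W = n := Submodule.finrank_orthogonal_span_singleton hv₀
  have : Nontrivial W := Module.nontrivial_of_finrank_pos (R := ℝ) (by rw [hW]; omega)
  set P := W.orthogonalProjectionOnto
  have hP : ∀ x ∈ capBoundary v t, (P x : E) = x - t • v := fun x hx => by
    rw [← Submodule.starProjection_apply, Submodule.starProjection_orthogonal_val,
      Submodule.starProjection_unit_singleton ℝ hv, real_inner_comm, hx.2]
  have hdist : ∀ x ∈ capBoundary v t, ∀ y ∈ capBoundary v t, dist (P x) (P y) = dist x y := by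
    intro x hx y hy
    rw [Subtype.dist_eq, hP x hx, hP y hy, dist_sub_right]
  have hinj : Set.InjOn P C := fun x hx y hy hxy =>
    dist_eq_zero.1 <| (hdist x (hC hx) y (hC hy)).symm.trans (by rw [hxy, dist_self])
  have hsphere : ↑(C.image P) ⊆ sphere (0 : W) √(1 - t ^ 2) := by
    intro z hz
    obtain ⟨x, hx, rfl⟩ := Finset.mem_image.1 hz
    rw [mem_sphere_zero_iff_norm, Submodule.coe_norm, hP x (hC hx),
      norm_sub_smul_of_mem_capBoundary hv (hC hx)]
  have hsep' : IsSeparated δ (C.image P : Set W) := by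
    rintro _ hPx _ hPy hne
    obtain ⟨x, hx, rfl⟩ := Finset.mem_image.1 hPx
    obtain ⟨y, hy, rfl⟩ := Finset.mem_image.1 hPy
    rw [edist_dist, hdist x (hC hx) y (hC hy), ← edist_dist]
    exact hsep hx hy (fun h => hne (by rw [h]))
  have key := card_mul_pow_le_of_isSeparated (C.image P) (Real.sqrt_nonneg _) hsphere hsep'
  rwa [Finset.card_image_of_injOn hinj, hW] at key

theorem dist_le_dist_of_inner_le {p q y : E} (hp : ‖p‖ = 1) (hq : ‖q‖ = 1) (hy : ‖y‖ = 1)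
    (h : ⟪p, q⟫ ≤ ⟪p, y⟫) : dist p y ≤ dist p q := by
  rw [dist_eq_norm, dist_eq_norm, ← sq_le_sq₀ (norm_nonneg _) (norm_nonneg _), norm_sub_sq_real,
    norm_sub_sq_real, hp, hq, hy]
  linarith

theorem smul_add_sqrt_smul_mem_capBoundary {u v : E} (hv : ‖v‖ = 1) (hu : ‖u‖ = 1)
    (huv : ⟪u, v⟫ = 0) {t : ℝ} (ht : |t| ≤ 1) : t • v + √(1 - t ^ 2) • u ∈ capBoundary v t := by
  have hs : √(1 - t ^ 2) ^ 2 = 1 - t ^ 2 := Real.sq_sqrt (by nlinarith [sq_abs t, abs_nonneg t])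
  refine ⟨?_, ?_⟩
  · rw [mem_sphere_zero_iff_norm, ← sq_eq_sq₀ (norm_nonneg _) zero_le_one, one_pow,
      norm_add_sq_real, norm_smul, norm_smul, real_inner_smul_left, real_inner_smul_right,
      real_inner_comm, huv, hv, hu, Real.norm_eq_abs, Real.norm_eq_abs,
      abs_of_nonneg (Real.sqrt_nonneg _)]
    nlinarith [sq_abs t]
  · rw [inner_add_left, real_inner_smul_left, real_inner_smul_left, huv,
      real_inner_self_eq_norm_sq, hv]
    ring

theorem exists_norm_eq_one_inner_eq_zero {n : ℕ} [Fact (finrank ℝ E = n + 1)] (hn : 1 ≤ n)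
    {v : E} (hv : v ≠ 0) : ∃ u : E, ‖u‖ = 1 ∧ ⟪u, v⟫ = 0 :=
  let b := OrthonormalBasis.fromOrthogonalSpanSingleton (𝕜 := ℝ) n hv
  ⟨b ⟨0, hn⟩, b.orthonormal.1 _,
    Submodule.mem_orthogonal_singleton_iff_inner_left.1 (b ⟨0, hn⟩).2⟩

theorem exists_eq_smul_add_sqrt_smul {n : ℕ} [Fact (finrank ℝ E = n + 1)] (hn : 1 ≤ n)
    {v p : E} (hv : ‖v‖ = 1) (hp : p ∈ sphere (0 : E) 1) :
    ∃ u : E, ‖u‖ = 1 ∧ ⟪u, v⟫ = 0 ∧ p = ⟪p, v⟫ • v + √(1 - ⟪p, v⟫ ^ 2) • u := by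
  set w := p - ⟪p, v⟫ • v
  have hw : ‖w‖ = √(1 - ⟪p, v⟫ ^ 2) := norm_sub_smul_of_mem_capBoundary hv ⟨hp, rfl⟩
  have hwv : ⟪w, v⟫ = 0 := by
    rw [inner_sub_left, real_inner_smul_left, real_inner_self_eq_norm_sq, hv]; ring
  rcases eq_or_ne w 0 with hw0 | hw0
  · obtain ⟨u, hu, huv⟩ := exists_norm_eq_one_inner_eq_zero hn (v := v) (by rintro rfl; simp at hv)
    refine ⟨u, hu, huv, ?_⟩
    rw [← hw, hw0, norm_zero, zero_smul, add_zero, ← sub_eq_zero]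
    exact hw0
  · refine ⟨‖w‖⁻¹ • w, ?_, ?_, ?_⟩
    · rw [norm_smul, norm_inv, norm_norm, inv_mul_cancel₀ (norm_ne_zero_iff.2 hw0)]
    · rw [real_inner_smul_left, hwv, mul_zero]
    · rw [← hw, smul_smul, mul_inv_cancel₀ (norm_ne_zero_iff.2 hw0), one_smul, add_sub_cancel]

theorem exists_mem_capBoundary_dist_le {n : ℕ} [Fact (finrank ℝ E = n + 1)] (hn : 1 ≤ n)
    {v p q : E} (hv : ‖v‖ = 1) (hp : p ∈ sphere (0 : E) 1) (hq : q ∈ sphere (0 : E) 1) {t : ℝ}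
    (hpt : t ≤ ⟪p, v⟫) (hqt : ⟪q, v⟫ ≤ t) : ∃ y ∈ capBoundary v t, dist p y ≤ dist p q := by
  rw [mem_sphere_zero_iff_norm] at hp hq
  set a := ⟪p, v⟫
  set b := ⟪q, v⟫
  have ha := abs_le.1 <| (abs_real_inner_le_norm p v).trans_eq (by rw [hp, hv, one_mul])
  have hb := abs_le.1 <| (abs_real_inner_le_norm q v).trans_eq (by rw [hq, hv, one_mul])
  obtain ⟨u, hu, huv, hpu⟩ := exists_eq_smul_add_sqrt_smul hn hv (mem_sphere_zero_iff_norm.2 hp)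
  have hy := smul_add_sqrt_smul_mem_capBoundary hv hu huv (t := t)
    (abs_le.2 ⟨by linarith, by linarith⟩)
  refine ⟨_, hy, dist_le_dist_of_inner_le hp hq (mem_sphere_zero_iff_norm.1 hy.1) ?_⟩
  have huq : ⟪u, q⟫ ≤ √(1 - b ^ 2) := calc
    ⟪u, q⟫ = ⟪u, q - b • v⟫ := by
      rw [inner_sub_right, real_inner_smul_right, huv, mul_zero, sub_zero]
    _ ≤ ‖u‖ * ‖q - b • v‖ := real_inner_le_norm _ _
    _ = √(1 - b ^ 2) := by
      rw [hu, one_mul, norm_sub_smul_of_mem_capBoundary hv ⟨mem_sphere_zero_iff_norm.2 hq, rfl⟩]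
  calc ⟪p, q⟫ = a * b + √(1 - a ^ 2) * ⟪u, q⟫ := by
        conv_lhs => rw [hpu]
        rw [inner_add_left, real_inner_smul_left, real_inner_smul_left, real_inner_comm q v]
    _ ≤ a * b + √(1 - a ^ 2) * √(1 - b ^ 2) := by gcongr
    _ ≤ a * t + √(1 - a ^ 2) * √(1 - t ^ 2) := mul_add_sqrt_mul_sqrt_le hb.1 hqt hpt ha.2
    _ = ⟪p, t • v + √(1 - t ^ 2) • u⟫ := by
        conv_rhs => rw [hpu]
        have hvu : ⟪v, u⟫ = 0 := by rw [real_inner_comm, huv]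
        simp only [inner_add_left, inner_add_right, real_inner_smul_left, real_inner_smul_right,
          real_inner_self_eq_norm_sq, hv, hu, huv, hvu]
        ring

end InnerProductSpace

section HemisphereChart

variable {E F : Type*} [NormedAddCommGroup E] [InnerProductSpace ℝ E] [NormedAddCommGroup F]
  [NormedSpace ℝ F]

noncomputable def hemisphereChart (y : E) (ι : F ≃ₗᵢ[ℝ] (ℝ ∙ y)ᗮ) (w : F) : E :=
  ι w + √(1 - ‖w‖ ^ 2) • y

theorem closedBall_inter_sphere_subset_image_hemisphereChart {y : E} (hy : ‖y‖ = 1)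
    (ι : F ≃ₗᵢ[ℝ] (ℝ ∙ y)ᗮ) {r : ℝ} (hr : r ≤ 1) :
    closedBall y r ∩ sphere 0 1 ⊆ hemisphereChart y ι '' closedBall 0 r := by
  rintro x ⟨hxy, hx⟩
  set s := ⟪x, y⟫
  have hx1 : ‖x‖ = 1 := mem_sphere_zero_iff_norm.1 hx
  have hw : ‖x - s • y‖ = √(1 - s ^ 2) := norm_sub_smul_of_mem_capBoundary hy ⟨hx, rfl⟩
  have hmem : x - s • y ∈ (ℝ ∙ y)ᗮ := Submodule.mem_orthogonal_singleton_iff_inner_left.2 <| by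
    rw [inner_sub_left, real_inner_smul_left, real_inner_self_eq_norm_sq, hy]; ring
  have hdist : ‖x - y‖ ^ 2 = 2 - 2 * s := by rw [norm_sub_sq_real, hx1, hy]; ring
  have hxy' : ‖x - y‖ ≤ r := by rwa [← dist_eq_norm, ← mem_closedBall]
  have hs : 1 / 2 ≤ s := by nlinarith [norm_nonneg (x - y)]
  refine ⟨ι.symm ⟨x - s • y, hmem⟩, ?_, ?_⟩
  · rw [mem_closedBall_zero_iff, LinearIsometryEquiv.norm_map, Submodule.coe_norm]
    refine (sq_le_sq₀ (norm_nonneg _) (by linarith [norm_nonneg (x - y)])).1 ?_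
    rw [hw, Real.sq_sqrt (by nlinarith)]
    nlinarith [pow_le_pow_left₀ (norm_nonneg _) hxy' 2]
  · rw [hemisphereChart, LinearIsometryEquiv.apply_symm_apply, LinearIsometryEquiv.norm_map,
      Submodule.coe_norm, hw, Real.sq_sqrt (by nlinarith), sub_sub_cancel,
      Real.sqrt_sq (by linarith), sub_add_cancel]

theorem lipschitzOnWith_hemisphereChart {y : E} (hy : ‖y‖ = 1) (ι : F ≃ₗᵢ[ℝ] (ℝ ∙ y)ᗮ) :
    LipschitzOnWith 2 (hemisphereChart y ι) (closedBall 0 (1 / 2)) := by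
  refine LipschitzOnWith.of_dist_le_mul fun w hw w' hw' => ?_
  rw [mem_closedBall_zero_iff] at hw hw'
  have hsqrt := abs_sqrt_one_sub_sq_sub_le (norm_nonneg w) hw (norm_nonneg w') hw'
  calc dist (hemisphereChart y ι w) (hemisphereChart y ι w')
      ≤ dist (ι w : E) (ι w') + ‖(√(1 - ‖w‖ ^ 2) - √(1 - ‖w'‖ ^ 2)) • y‖ := by
        rw [dist_eq_norm, dist_eq_norm, hemisphereChart, hemisphereChart, sub_smul,
          add_sub_add_comm]
        exact norm_add_le _ _
    _ ≤ dist w w' + dist w w' := by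
        rw [← Subtype.dist_eq, ι.dist_map, norm_smul, hy, mul_one, Real.norm_eq_abs]
        gcongr
        exact hsqrt.trans ((abs_norm_sub_norm_le w w').trans_eq (dist_eq_norm w w').symm)
    _ = (2 : ℝ≥0) * dist w w' := by push_cast; ring

end HemisphereChart

theorem hausdorffMeasure_closedBall_inter_sphere_le {E : Type*} [NormedAddCommGroup E]
    [InnerProductSpace ℝ E] [MeasurableSpace E] [BorelSpace E] {n : ℕ}
    [Fact (finrank ℝ E = n + 1)] {y : E} (hy : ‖y‖ = 1) {r : ℝ} (hr₀ : 0 ≤ r) (hr : r ≤ 1 / 2) :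
    μH[n] (closedBall y r ∩ sphere 0 1) ≤
      2 ^ n * ENNReal.ofReal (r ^ n) * μH[n] (ball (0 : EuclideanSpace ℝ (Fin n)) 1) := by
  have hy₀ : y ≠ 0 := by rintro rfl; simp at hy
  set ι := (OrthonormalBasis.fromOrthogonalSpanSingleton (𝕜 := ℝ) n hy₀).repr.symm
  calc μH[n] (closedBall y r ∩ sphere 0 1)
      ≤ μH[n] (hemisphereChart y ι '' closedBall 0 r) :=
        measure_mono (closedBall_inter_sphere_subset_image_hemisphereChart hy ι (by linarith))
    _ ≤ (2 : ℝ≥0) ^ (n : ℝ) * μH[n] (closedBall (0 : EuclideanSpace ℝ (Fin n)) r) :=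
        ((lipschitzOnWith_hemisphereChart hy ι).mono
          (closedBall_subset_closedBall hr)).hausdorffMeasure_image_le (Nat.cast_nonneg n)
    _ = _ := by
        rw [Measure.addHaar_closedBall _ _ hr₀, finrank_euclideanSpace_fin, ENNReal.rpow_natCast,
          ENNReal.coe_ofNat, mul_assoc]

instance (d : ℕ) : Fact (finrank ℝ (EuclideanSpace ℝ (Fin (d + 1))) = d + 1) :=
  ⟨finrank_euclideanSpace_fin⟩

noncomputable def capMeasureConstant (d : ℕ) : ℝ≥0∞ :=
  (μH[d] (sphere (0 : EuclideanSpace ℝ (Fin (d + 1))) 1))⁻¹ *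
    (2 ^ d * μH[d] (ball (0 : EuclideanSpace ℝ (Fin d)) 1))

theorem sphereMeasure_closedBall_le {d : ℕ} {y : EuclideanSpace ℝ (Fin (d + 1))} (hy : ‖y‖ = 1)
    {r : ℝ} (hr₀ : 0 ≤ r) (hr : r ≤ 1 / 2) :
    sphereMeasure d (closedBall y r) ≤ capMeasureConstant d * ENNReal.ofReal (r ^ d) := by
  rw [sphereMeasure, Measure.smul_apply, Measure.restrict_apply measurableSet_closedBall,
    smul_eq_mul, capMeasureConstant, mul_assoc, mul_right_comm _ _ (ENNReal.ofReal _)]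
  gcongr
  exact hausdorffMeasure_closedBall_inter_sphere_le hy hr₀ hr

theorem capMeasureConstant_ne_top {d : ℕ} {s : Set (EuclideanSpace ℝ (Fin (d + 1)))}
    (hs : sphereMeasure d s ≠ 0) : capMeasureConstant d ≠ ⊤ := by
  refine ENNReal.mul_ne_top (ENNReal.inv_ne_top.2 fun h => hs ?_)
    (ENNReal.mul_ne_top (by simp) measure_ball_lt_top.ne)
  rw [sphereMeasure, h, ENNReal.inv_zero, Measure.smul_apply, smul_eq_mul,
    Measure.restrict_apply' isClosed_sphere.measurableSet,
    measure_mono_null Set.inter_subset_right h, mul_zero]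

theorem exists_mem_capBoundary_subset_closedBall {d : ℕ} (hd : 1 ≤ d)
    {v : EuclideanSpace ℝ (Fin (d + 1))} (hv : ‖v‖ = 1) {t : ℝ}
    {s : Set (EuclideanSpace ℝ (Fin (d + 1)))} (hs : Bornology.IsBounded s)
    (hin : (s ∩ sphericalCap d v t).Nonempty)
    (hout : (s ∩ (sphere 0 1 \ sphericalCap d v t)).Nonempty) :
    ∃ y ∈ capBoundary v t, s ⊆ closedBall y (2 * diam s) := by
  obtain ⟨p, hps, hpS, hpt⟩ := hin
  obtain ⟨q, hqs, hqS, hqC⟩ := hout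
  have hqt : ⟪q, v⟫ ≤ t := le_of_not_ge fun h => hqC ⟨hqS, h⟩
  obtain ⟨y, hy, hpy⟩ := exists_mem_capBoundary_dist_le hd hv hpS hqS hpt hqt
  refine ⟨y, hy, fun z hz => ?_⟩
  calc dist z y ≤ dist z p + dist p y := dist_triangle z p y
    _ ≤ diam s + diam s :=
        add_le_add (dist_le_diam_of_mem hs hz hps) (hpy.trans (dist_le_diam_of_mem hs hps hqs))
    _ = 2 * diam s := by ring

theorem exists_finset_cover_of_regions_meeting_capBoundary {d : ℕ} (hd : 1 ≤ d)
    {v : EuclideanSpace ℝ (Fin (d + 1))} (hv : ‖v‖ = 1) {t : ℝ} {ι : Type*}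
    {R : ι → Set (EuclideanSpace ℝ (Fin (d + 1)))} (hR : ∀ i, R i ⊆ sphere 0 1) {ε : ℝ}
    (hε₀ : 0 < ε) (hε : ε ≤ 2) (hdiam : ∀ i, diam (R i) ≤ ε) {F : Finset ι}
    (hF : ∀ i ∈ F, (R i ∩ sphericalCap d v t).Nonempty ∧
      (R i ∩ (sphere 0 1 \ sphericalCap d v t)).Nonempty) :
    ∃ C : Finset (EuclideanSpace ℝ (Fin (d + 1))), (∀ c ∈ C, ‖c‖ = 1) ∧
      (C.card : ℝ) * (ε / 2) ^ d ≤ d * 2 ^ (d - 1) * ε ∧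
      ⋃ i ∈ F, R i ⊆ ⋃ c ∈ C, closedBall c (3 * ε) := by
  have hY : ∀ i ∈ F, ∃ y ∈ capBoundary v t, R i ⊆ closedBall y (2 * ε) := fun i hi => by
    obtain ⟨y, hy, hRy⟩ := exists_mem_capBoundary_subset_closedBall hd hv
      (isBounded_sphere.subset (hR i)) (hF i hi).1 (hF i hi).2
    exact ⟨y, hy, hRy.trans (closedBall_subset_closedBall (by linarith [hdiam i]))⟩
  choose! Y hYb hYR using hY
  obtain ⟨C, hCY, hCsep, hCcov⟩ := Metric.exists_subset_isSeparated_isCover (F.image Y) ε.toNNReal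
  have hCb : ↑C ⊆ capBoundary v t := fun c hc => by
    obtain ⟨i, hi, rfl⟩ := Finset.mem_image.1 (hCY hc)
    exact hYb i hi
  refine ⟨C, fun c hc => mem_sphere_zero_iff_norm.1 (hCb hc).1, ?_, ?_⟩
  · have hpack := card_mul_pow_le_of_isSeparated_capBoundary hd hv C hCb hCsep
    rw [Real.coe_toNNReal _ hε₀.le] at hpack
    refine hpack.trans ?_
    gcongr
    linarith [Real.sqrt_le_one.2 (by nlinarith : 1 - t ^ 2 ≤ 1)]
  · simp only [Set.iUnion_subset_iff]
    intro i hi z hz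
    obtain ⟨c, hc, hYc⟩ := Set.mem_iUnion₂.1 <| hCcov.subset_iUnion_closedBall <|
      Finset.mem_coe.2 (Finset.mem_image_of_mem Y hi)
    rw [Real.coe_toNNReal _ hε₀.le, mem_closedBall] at hYc
    refine Set.mem_iUnion₂.2 ⟨c, hc, ?_⟩
    rw [mem_closedBall]
    linarith [dist_triangle z (Y i) c, mem_closedBall.1 (hYR i hi hz)]

theorem card_regions_meeting_cap_boundary_le_mul {d : ℕ} (hd : 1 ≤ d) {ι : Type*} [Nonempty ι]
    {R : ι → Set (EuclideanSpace ℝ (Fin (d + 1)))} (hRm : ∀ i, MeasurableSet (R i))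
    (hdisj : Pairwise (Function.onFun Disjoint R)) (hR : ∀ i, R i ⊆ sphere 0 1) {N : ℕ} (hN : 0 < N)
    (hmeas : ∀ i, sphereMeasure d (R i) = 1 / (N : ℝ≥0∞)) {ε : ℝ} (hε₀ : 0 < ε)
    (hε : ε ≤ 1 / 6) (hdiam : ∀ i, diam (R i) ≤ ε) {v : EuclideanSpace ℝ (Fin (d + 1))}
    (hv : ‖v‖ = 1) {t : ℝ} {F : Finset ι}
    (hF : ∀ i ∈ F, (R i ∩ sphericalCap d v t).Nonempty ∧
      (R i ∩ (sphere 0 1 \ sphericalCap d v t)).Nonempty) :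
    (F.card : ℝ) ≤ (capMeasureConstant d).toReal * d * 12 ^ d * N * ε := by
  obtain ⟨C, hC, hCcard, hcover⟩ :=
    exists_finset_cover_of_regions_meeting_capBoundary hd hv hR hε₀ (by linarith) hdiam hF
  have hcap : capMeasureConstant d ≠ ⊤ :=
    capMeasureConstant_ne_top (s := R (Classical.arbitrary ι)) (by simp [hmeas])
  have hcount : (F.card : ℝ≥0∞) * (1 / N) ≤
      C.card * (capMeasureConstant d * ENNReal.ofReal ((3 * ε) ^ d)) := by
    refine (card_mul_le_sum_measure hRm hdisj hmeas hcover).trans ?_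
    rw [← nsmul_eq_mul]
    exact Finset.sum_le_card_nsmul _ _ _ fun c hc =>
      sphereMeasure_closedBall_le (hC c hc) (by positivity) (by linarith)
  have hreal := ENNReal.toReal_mono (by finiteness) hcount
  simp only [ENNReal.toReal_mul, ENNReal.toReal_natCast, one_div, ENNReal.toReal_inv,
    ENNReal.toReal_ofReal (by positivity : 0 ≤ (3 * ε) ^ d)] at hreal
  have hC3 : (C.card : ℝ) * (3 * ε) ^ d ≤ d * 12 ^ d * ε := calc
    _ = C.card * (ε / 2) ^ d * 6 ^ d := by rw [mul_assoc, ← mul_pow]; ring_nf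
    _ ≤ d * 2 ^ (d - 1) * ε * 6 ^ d := by gcongr
    _ ≤ d * 2 ^ d * ε * 6 ^ d := by gcongr; exacts [one_le_two, Nat.sub_le d 1]
    _ = d * 12 ^ d * ε := by rw [show (12 : ℝ) = 2 * 6 by norm_num, mul_pow]; ring
  have hN' : (0 : ℝ) < N := by exact_mod_cast hN
  calc (F.card : ℝ) = F.card * (N : ℝ)⁻¹ * N := by field_simp
    _ ≤ C.card * ((capMeasureConstant d).toReal * (3 * ε) ^ d) * N := by gcongr
    _ = (capMeasureConstant d).toReal * (C.card * (3 * ε) ^ d) * N := by ring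
    _ ≤ (capMeasureConstant d).toReal * (d * 12 ^ d * ε) * N := by gcongr
    _ = _ := by ring

/-- Only `O(N^{(d-1)/d})` regions of a diameter-bounded equal-area partition of `S^d` can meet
both a spherical cap and its complement in the sphere. -/
theorem card_regions_meeting_cap_boundary_le
    (d : ℕ) (hd : 1 ≤ d) (c : ℝ) (hc : 0 < c) :
    ∃ K : ℝ, 0 < K ∧ ∀ N : ℕ, 0 < N →
      ∀ R : Fin N → Set (EuclideanSpace ℝ (Fin (d + 1))),
        (∀ i, MeasurableSet (R i)) →
        Pairwise (Function.onFun Disjoint R) →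
        (⋃ i, R i) = sphere (0 : EuclideanSpace ℝ (Fin (d + 1))) 1 →
        (∀ i, sphereMeasure d (R i) = 1 / (N : ℝ≥0∞)) →
        (∀ i, Metric.diam (R i) ≤ c * (N : ℝ) ^ (-(1 : ℝ) / d)) →
        ∀ (v : EuclideanSpace ℝ (Fin (d + 1))) (t : ℝ), ‖v‖ = 1 →
          ((Finset.univ.filter fun i : Fin N =>
              (R i ∩ sphericalCap d v t).Nonempty ∧
              (R i ∩ (sphere (0 : EuclideanSpace ℝ (Fin (d + 1))) 1 \
                sphericalCap d v t)).Nonempty).card : ℝ)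
            ≤ K * (N : ℝ) ^ (((d : ℝ) - 1) / d) := by
  set κ := (capMeasureConstant d).toReal * d * 12 ^ d
  refine ⟨(6 * c) ^ d + κ * c, by positivity, ?_⟩
  intro N hN R hRm hdisj hunion hmeas hdiam v t hv
  have : Nonempty (Fin N) := ⟨⟨0, hN⟩⟩
  have hN₁ : (1 : ℝ) ≤ N := by exact_mod_cast hN
  have hR : ∀ i, R i ⊆ sphere 0 1 := fun i => hunion ▸ Set.subset_iUnion R i
  have hd₀ : d ≠ 0 := by omega
  set F := Finset.univ.filter fun i : Fin N => (R i ∩ sphericalCap d v t).Nonempty ∧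
    (R i ∩ (sphere (0 : EuclideanSpace ℝ (Fin (d + 1))) 1 \ sphericalCap d v t)).Nonempty
  -- `1 / 6` makes the `3ε`-balls of the covering small enough for `sphereMeasure_closedBall_le`
  rcases le_or_gt (c * (N : ℝ) ^ (-(1 : ℝ) / d)) (1 / 6) with hε | hε
  · calc (F.card : ℝ) ≤ κ * N * (c * (N : ℝ) ^ (-(1 : ℝ) / d)) :=
          card_regions_meeting_cap_boundary_le_mul hd hRm hdisj hR hN hmeas (by positivity) hε
            hdiam hv fun i hi => (Finset.mem_filter.1 hi).2
      _ = κ * c * N ^ (((d : ℝ) - 1) / d) := by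
          rw [← Real.mul_rpow_neg_one_div (by positivity) hd₀]; ring
      _ ≤ _ := by gcongr; exact le_add_of_nonneg_left (by positivity)
  · calc (F.card : ℝ) ≤ N := by exact_mod_cast F.card_le_univ.trans_eq (Fintype.card_fin N)
      _ ≤ (6 * c) ^ d * N ^ (((d : ℝ) - 1) / d) :=
          le_pow_mul_rpow_of_one_lt_mul_rpow hd₀ hN₁ (by linarith)
      _ ≤ _ := by gcongr; exact le_add_of_nonneg_right (by positivity)
end

section
/- For every integer d ≥ 1 there exists a constant C_d > 0 such that for every positive integer N there exists a finite set X ⊂ S^d with card X = N whose covering radius is at most C_d · N^{-1/d}; that is, every point of S^d lies within Euclidean distance C_d · N^{-1/d} of some point of X. -/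
/-!
Every unit vector is the radial projection of a point on the boundary of the cube `[-1, 1]^(d+1)`,
and that boundary is the union of `2(d+1)` faces, each an isometric copy of `[-1, 1]^d`. The
centres of a `k × ⋯ × k` subdivision of a face are `√d / k`-dense in it, and radial projection is
`1`-Lipschitz outside the open unit ball, so the projected grids form a `√d / k`-net of `S^d` with
at most `2(d+1) k^d` points. Taking `k ≈ (N / 2(d+1))^(1/d)` and padding with further points of the
(infinite) sphere gives exactly `N` points with covering radius `O(N^(-1/d))`.
-/

open Metric Real Finset

section Normalize
variable {E : Type*} [NormedAddCommGroup E] [InnerProductSpace ℝ E]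

theorem dist_inv_norm_smul_le_dist {x y : E} (hx : 1 ≤ ‖x‖) (hy : 1 ≤ ‖y‖) :
    dist (‖x‖⁻¹ • x) (‖y‖⁻¹ • y) ≤ dist x y := by
  have hunit : ∀ z : E, 1 ≤ ‖z‖ → ‖‖z‖⁻¹ • z‖ = 1 := fun z hz => by
    rw [norm_smul, norm_inv, norm_norm, inv_mul_cancel₀ (by positivity)]
  rw [dist_eq_norm, dist_eq_norm,
    ← pow_le_pow_iff_left₀ (norm_nonneg _) (norm_nonneg _) two_ne_zero,
    norm_sub_sq_real, norm_sub_sq_real, hunit x hx, hunit y hy, real_inner_smul_left,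
    real_inner_smul_right]
  set a := ‖x‖
  set b := ‖y‖
  have hab : 1 ≤ a * b := one_le_mul_of_one_le_of_one_le hx hy
  -- `⟪x, y⟫ ≤ ‖x‖ ‖y‖` reduces the claim to `(‖x‖ - ‖y‖)² ≥ 0`
  have hc : inner ℝ x y * (1 - (a * b)⁻¹) ≤ a * b * (1 - (a * b)⁻¹) :=
    mul_le_mul_of_nonneg_right (real_inner_le_norm x y) (by linarith [inv_le_one_of_one_le₀ hab])
  have hab' : a * b * (1 - (a * b)⁻¹) = a * b - 1 := by field_simp
  have : a⁻¹ * (b⁻¹ * inner ℝ x y) = (a * b)⁻¹ * inner ℝ x y := by rw [mul_inv]; ring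
  nlinarith [sq_nonneg (a - b)]

end Normalize

theorem infinite_sphere_zero {E : Type*} [NormedAddCommGroup E] [NormedSpace ℝ E]
    (h : 1 < Module.rank ℝ E) {r : ℝ} (hr : 0 < r) : (sphere (0 : E) r).Infinite := by
  have : Nontrivial E := rank_pos_iff_nontrivial.mp (zero_lt_one.trans h)
  obtain ⟨x, hx⟩ := exists_norm_eq E hr.le
  have hx0 : x ≠ 0 := norm_ne_zero_iff.mp (hx ▸ hr.ne')
  refine (isPreconnected_sphere h 0 r).infinite_of_nontrivial
    ⟨x, by simpa using hx, -x, by simpa using hx, ?_⟩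
  simpa [eq_neg_iff_add_eq_zero, ← two_smul ℝ] using hx0

section Nets
variable {α : Type*}

theorem Set.Infinite.exists_finset_superset_card_eq {S : Set α} (hS : S.Infinite)
    {T : Finset α} (hT : ↑T ⊆ S) {N : ℕ} (hN : T.card ≤ N) :
    ∃ X : Finset α, T ⊆ X ∧ ↑X ⊆ S ∧ X.card = N := by
  classical
  obtain ⟨P, hPS, hPcard⟩ := (hS.sdiff T.finite_toSet).exists_subset_card_eq (N - T.card)
  have hTP : Disjoint T P := Finset.disjoint_left.mpr fun _ hxT hxP => (hPS hxP).2 hxT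
  refine ⟨T ∪ P, Finset.subset_union_left, ?_, ?_⟩
  · rw [coe_union]
    exact Set.union_subset hT (hPS.trans Set.sdiff_subset)
  · rw [card_union_of_disjoint hTP, hPcard]
    omega

theorem exists_pos_mul_pow_le {A N d : ℕ} (hA : 0 < A) (hd : d ≠ 0) (hAN : A ≤ N) :
    ∃ k : ℕ, 0 < k ∧ A * k ^ d ≤ N ∧ (k : ℝ)⁻¹ ≤ 2 * ((A : ℝ) / N) ^ (d⁻¹ : ℝ) := by
  have hA' : (0 : ℝ) < A := by exact_mod_cast hA
  have hAN' : (A : ℝ) ≤ N := by exact_mod_cast hAN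
  set x := ((N : ℝ) / A) ^ (d⁻¹ : ℝ)
  have hx : 1 ≤ x := one_le_rpow ((one_le_div hA').mpr hAN') (by positivity)
  have hk : 1 ≤ ⌊x⌋₊ := Nat.le_floor (by exact_mod_cast hx)
  refine ⟨⌊x⌋₊, hk, ?_, ?_⟩
  · have : (⌊x⌋₊ : ℝ) ^ d ≤ N / A :=
      (pow_le_pow_left₀ (by positivity) (Nat.floor_le (by positivity)) d).trans
        (rpow_inv_natCast_pow (by positivity) hd).le
    rw [le_div_iff₀ hA'] at this
    exact_mod_cast (mul_comm (A : ℝ) _ ▸ this)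
  · have hxk : x ≤ 2 * ⌊x⌋₊ := by
      have := Nat.lt_floor_add_one x
      have : (1 : ℝ) ≤ ⌊x⌋₊ := by exact_mod_cast hk
      linarith
    rw [← inv_div, inv_rpow (by positivity), ← div_eq_mul_inv, ← inv_div]
    exact inv_anti₀ (by positivity) (by linarith)

theorem exists_finset_card_eq_forall_dist_le_of_nets [PseudoMetricSpace α] {S : Set α}
    (hS : S.Infinite) (hSb : Bornology.IsBounded S) {d A : ℕ} (hd : d ≠ 0) (hA : 0 < A) {B : ℝ}
    (hB : 0 < B) (hnet : ∀ k : ℕ, 0 < k → ∃ T : Finset α, ↑T ⊆ S ∧ T.card ≤ A * k ^ d ∧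
      ∀ y ∈ S, ∃ x ∈ T, dist y x ≤ B / k) :
    ∃ C : ℝ, 0 < C ∧ ∀ N : ℕ, 0 < N → ∃ X : Finset α, ↑X ⊆ S ∧ X.card = N ∧
      ∀ y ∈ S, ∃ x ∈ X, dist y x ≤ C * (N : ℝ) ^ (-(1 : ℝ) / d) := by
  have hD := diam_nonneg (s := S)
  refine ⟨(diam S + 2 * B) * (A : ℝ) ^ (d⁻¹ : ℝ), by positivity, fun N hN => ?_⟩
  set r := ((A : ℝ) / N) ^ (d⁻¹ : ℝ)
  have hr : (diam S + 2 * B) * (A : ℝ) ^ (d⁻¹ : ℝ) * (N : ℝ) ^ (-(1 : ℝ) / d)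
      = (diam S + 2 * B) * r := by
    rw [neg_div, one_div, rpow_neg (by positivity), mul_assoc, ← div_eq_mul_inv,
      ← div_rpow (by positivity) (by positivity)]
  suffices ∃ T : Finset α, ↑T ⊆ S ∧ T.card ≤ N ∧
      ∀ y ∈ S, ∃ x ∈ T, dist y x ≤ (diam S + 2 * B) * r by
    obtain ⟨T, hTS, hTN, hT⟩ := this
    obtain ⟨X, hTX, hXS, hXN⟩ := hS.exists_finset_superset_card_eq hTS hTN
    refine ⟨X, hXS, hXN, fun y hy => ?_⟩
    obtain ⟨x, hx, hyx⟩ := hT y hy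
    exact ⟨x, hTX hx, hr ▸ hyx⟩
  rcases lt_or_ge N A with hNA | hAN
  · -- too few points for a grid: a single point is within `diam S` of everything
    obtain ⟨x, hx⟩ := hS.nonempty
    have hr1 : 1 ≤ r := one_le_rpow ((one_le_div (by positivity)).mpr (by exact_mod_cast hNA.le))
      (by positivity)
    refine ⟨{x}, by simpa using hx, by rw [card_singleton]; exact hN,
      fun y hy => ⟨x, mem_singleton_self x, ?_⟩⟩
    calc dist y x ≤ diam S := dist_le_diam_of_mem hSb hy hx
      _ ≤ (diam S + 2 * B) * r := by nlinarith
  · obtain ⟨k, hk, hkN, hkr⟩ := exists_pos_mul_pow_le hA hd hAN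
    obtain ⟨T, hTS, hTk, hT⟩ := hnet k hk
    refine ⟨T, hTS, hTk.trans hkN, fun y hy => ?_⟩
    obtain ⟨x, hx, hyx⟩ := hT y hy
    refine ⟨x, hx, hyx.trans ?_⟩
    have : 0 ≤ r := by positivity
    calc B / k = B * (k : ℝ)⁻¹ := div_eq_mul_inv _ _
      _ ≤ B * (2 * r) := by gcongr
      _ ≤ (diam S + 2 * B) * r := by nlinarith

end Nets

theorem exists_fin_le_le_succ {k : ℕ} (hk : 0 < k) {t : ℝ} (ht0 : 0 ≤ t) (htk : t ≤ k) :
    ∃ j : Fin k, (j : ℝ) ≤ t ∧ t ≤ j + 1 := by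
  -- truncated subtraction makes `j = 0` when `t = 0`
  refine ⟨⟨⌈t⌉₊ - 1, by have := Nat.ceil_le.mpr htk; omega⟩, ?_, ?_⟩
  · rcases Nat.eq_zero_or_pos ⌈t⌉₊ with h | h
    · simp [h, ht0]
    · have := Nat.ceil_lt_add_one ht0
      push_cast [Nat.cast_sub h]
      linarith
  · calc t ≤ ⌈t⌉₊ := Nat.le_ceil t
      _ ≤ ((⌈t⌉₊ - 1 : ℕ) : ℝ) + 1 := by exact_mod_cast (by omega : ⌈t⌉₊ ≤ ⌈t⌉₊ - 1 + 1)

theorem exists_abs_sub_midpoint_le {k : ℕ} (hk : 0 < k) {x : ℝ} (hx : |x| ≤ 1) :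
    ∃ j : Fin k, |x - ((2 * j + 1) / k - 1)| ≤ 1 / k := by
  have hk' : (0 : ℝ) < k := by exact_mod_cast hk
  obtain ⟨hx1, hx2⟩ := abs_le.mp hx
  obtain ⟨j, hj1, hj2⟩ := exists_fin_le_le_succ hk (t := (x + 1) * k / 2) (by nlinarith)
    (by rw [div_le_iff₀ two_pos]; nlinarith)
  refine ⟨j, ?_⟩
  have : x - ((2 * j + 1) / k - 1) = (2 * ((x + 1) * k / 2 - j) - 1) / k := by field_simp; ring
  rw [this, abs_div, abs_of_pos hk', div_le_div_iff_of_pos_right hk', abs_le]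
  constructor <;> linarith

noncomputable def cubeGrid (d k : ℕ) : Finset (EuclideanSpace ℝ (Fin d)) :=
  univ.image fun j : Fin d → Fin k => WithLp.toLp 2 fun i => (2 * (j i : ℝ) + 1) / k - 1

theorem card_cubeGrid_le (d k : ℕ) : (cubeGrid d k).card ≤ k ^ d :=
  card_image_le.trans (by simp)

theorem exists_mem_cubeGrid_dist_le {d k : ℕ} (hk : 0 < k) (u : EuclideanSpace ℝ (Fin d))
    (hu : ∀ i, |u i| ≤ 1) : ∃ g ∈ cubeGrid d k, dist u g ≤ √d / k := by
  choose j hj using fun i => exists_abs_sub_midpoint_le hk (hu i)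
  refine ⟨_, mem_image_of_mem _ (mem_univ j), ?_⟩
  rw [EuclideanSpace.dist_eq]
  calc √(∑ i, dist (u i) ((2 * (j i : ℝ) + 1) / k - 1) ^ 2)
        ≤ √(∑ _i : Fin d, (1 / k : ℝ) ^ 2) := by
        gcongr with i
        rw [Real.dist_eq]
        exact hj i
    _ = √d / k := by simp [Real.sqrt_mul, Real.sqrt_sq, div_eq_mul_inv]

section Faces
variable {d : ℕ}

def faceChart (i : Fin (d + 1)) (s : ℝ) (u : EuclideanSpace ℝ (Fin d)) :
    EuclideanSpace ℝ (Fin (d + 1)) :=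
  WithLp.toLp 2 (Fin.insertNth i s u.ofLp)

theorem dist_faceChart (i : Fin (d + 1)) (s : ℝ) (u v : EuclideanSpace ℝ (Fin d)) :
    dist (faceChart i s u) (faceChart i s v) = dist u v := by
  simp [EuclideanSpace.dist_eq, Fin.sum_univ_succAbove _ i, faceChart]

theorem one_le_norm_faceChart {i : Fin (d + 1)} {s : ℝ} (hs : s ∈ ({-1, 1} : Finset ℝ))
    (u : EuclideanSpace ℝ (Fin d)) : 1 ≤ ‖faceChart i s u‖ := by
  have hs1 : |s| = 1 := by rcases mem_insert.mp hs with rfl | hs <;> simp_all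
  simpa [faceChart, hs1] using PiLp.norm_apply_le (faceChart i s u) i

theorem exists_faceChart_eq (y : EuclideanSpace ℝ (Fin (d + 1))) (hy : y ≠ 0) :
    ∃ i, ∃ s ∈ ({-1, 1} : Finset ℝ), ∃ u : EuclideanSpace ℝ (Fin d), (∀ j, |u j| ≤ 1) ∧
      ‖faceChart i s u‖⁻¹ • faceChart i s u = ‖y‖⁻¹ • y := by
  obtain ⟨i, -, hi⟩ := exists_max_image univ (fun j => |y j|) univ_nonempty
  have hm : 0 < |y i| := by
    by_contra! h
    exact hy (by ext j; simpa using (hi j (mem_univ j)).trans h)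
  set z := |y i|⁻¹ • y
  refine ⟨i, z i, ?_, WithLp.toLp 2 (Fin.removeNth i z.ofLp), fun j => ?_, ?_⟩
  · rcases lt_or_gt_of_ne (abs_pos.mp hm) with h | h <;>
      simp [z, abs_of_neg, abs_of_pos, h, h.ne, h.ne']
  · simpa [z, Fin.removeNth, abs_mul, inv_mul_le_one₀ hm] using hi _ (mem_univ _)
  · have hz : faceChart i (z i) (WithLp.toLp 2 (Fin.removeNth i z.ofLp)) = z := by
      simp [faceChart]
    rw [hz, norm_smul, norm_inv, Real.norm_eq_abs, abs_abs, mul_inv, inv_inv, smul_smul]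
    congr 1
    field_simp

end Faces

open scoped Classical in
noncomputable def sphereNet (d k : ℕ) : Finset (EuclideanSpace ℝ (Fin (d + 1))) :=
  (univ ×ˢ {-1, 1}).biUnion fun p : Fin (d + 1) × ℝ =>
    (cubeGrid d k).image fun g => ‖faceChart p.1 p.2 g‖⁻¹ • faceChart p.1 p.2 g

theorem card_sphereNet_le (d k : ℕ) : (sphereNet d k).card ≤ 2 * (d + 1) * k ^ d := by
  classical
  calc (sphereNet d k).card ≤ ∑ _p ∈ univ ×ˢ ({-1, 1} : Finset ℝ), k ^ d :=
        card_biUnion_le.trans (sum_le_sum fun _ _ => card_image_le.trans (card_cubeGrid_le d k))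
    _ = 2 * (d + 1) * k ^ d := by simp [card_pair (by norm_num : (-1 : ℝ) ≠ 1), mul_comm]

theorem sphereNet_subset (d k : ℕ) :
    ↑(sphereNet d k) ⊆ sphere (0 : EuclideanSpace ℝ (Fin (d + 1))) 1 := by
  intro y hy
  simp only [sphereNet, coe_biUnion, coe_image, Set.mem_iUnion, Set.mem_image] at hy
  obtain ⟨⟨i, s⟩, hp, g, -, rfl⟩ := hy
  have := one_le_norm_faceChart (mem_product.mp hp).2 g (i := i)
  rw [mem_sphere_zero_iff_norm, norm_smul, norm_inv, norm_norm, inv_mul_cancel₀ (by positivity)]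

theorem exists_mem_sphereNet_dist_le {d k : ℕ} (hk : 0 < k)
    {y : EuclideanSpace ℝ (Fin (d + 1))} (hy : y ∈ sphere 0 1) :
    ∃ x ∈ sphereNet d k, dist y x ≤ √d / k := by
  classical
  have hy1 : ‖y‖ = 1 := mem_sphere_zero_iff_norm.mp hy
  obtain ⟨i, s, hs, u, hu, hyu⟩ := exists_faceChart_eq y (by rintro rfl; simp at hy1)
  obtain ⟨g, hg, hug⟩ := exists_mem_cubeGrid_dist_le hk u hu
  refine ⟨‖faceChart i s g‖⁻¹ • faceChart i s g, ?_, ?_⟩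
  · simp only [sphereNet, mem_biUnion, mem_image]
    exact ⟨(i, s), mem_product.mpr ⟨mem_univ i, hs⟩, g, hg, rfl⟩
  · calc dist y _ = dist (‖faceChart i s u‖⁻¹ • faceChart i s u) _ := by
          rw [hyu, hy1, inv_one, one_smul]
      _ ≤ dist (faceChart i s u) (faceChart i s g) :=
        dist_inv_norm_smul_le_dist (one_le_norm_faceChart hs u) (one_le_norm_faceChart hs g)
      _ ≤ √d / k := (dist_faceChart i s u g).trans_le hug

/-- For every `d ≥ 1` there is a constant `C_d > 0` such that for every positive integer `N`
there is an `N`-point subset of `S^d` with covering radius at most `C_d · N^{-1/d}`: every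
point of the sphere is within Euclidean distance `C_d · N^{-1/d}` of some point of the set. -/
theorem exists_good_covering_spherical_codes (d : ℕ) (hd : 1 ≤ d) :
    ∃ C : ℝ, 0 < C ∧ ∀ N : ℕ, 0 < N →
      ∃ X : Finset (EuclideanSpace ℝ (Fin (d + 1))),
        ↑X ⊆ sphere (0 : EuclideanSpace ℝ (Fin (d + 1))) 1 ∧
        X.card = N ∧
        ∀ y ∈ sphere (0 : EuclideanSpace ℝ (Fin (d + 1))) 1,
          ∃ x ∈ X, dist y x ≤ C * (N : ℝ) ^ (-(1 : ℝ) / d) := by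
  have hrank : 1 < Module.rank ℝ (EuclideanSpace ℝ (Fin (d + 1))) := by
    rw [← Module.finrank_eq_rank, finrank_euclideanSpace_fin]
    exact_mod_cast Nat.lt_succ_of_le hd
  exact exists_finset_card_eq_forall_dist_le_of_nets (infinite_sphere_zero hrank one_pos)
    isBounded_sphere (by omega) (by positivity : 0 < 2 * (d + 1)) (by positivity : (0 : ℝ) < √d)
    fun k hk => ⟨sphereNet d k, sphereNet_subset d k, card_sphereNet_le d k,
      fun _ hy => exists_mem_sphereNet_dist_le hk hy⟩
end

section
/- Let n be a positive integer, let X ⊂ S^2 be a finite set, and let w : X → ℝ be strictly positive weights. Then there exist a subset Y ⊆ X with card Y ≤ (n+1)² and strictly positive weights v : Y → ℝ such that ∑_{y ∈ Y} v(y) · p(y) = ∑_{x ∈ X} w(x) · p(x) for every real polynomial p in three variables of total degree at most n. -/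
/-!
Evaluation at a point is a linear functional on the space `V` of polynomials of degree `≤ n`
restricted to `S²`, and the weighted sum over `X` is a positive combination of such functionals.
Carathéodory's theorem for cones rewrites it as a positive combination of linearly independent
ones, hence of at most `dim V` of them. Substituting `z² = 1 - x² - y²` shows that `V` lies in
the span of the `(n + 1)²` monomials `x^a y^b z^c` with `c ≤ 1` and `a + b + c ≤ n`.
-/

open Finset Metric Module

section ConeCaratheodory

variable {𝕜 α E : Type*} [Field 𝕜] [LinearOrder 𝕜] [IsStrictOrderedRing 𝕜]
  [AddCommGroup E] [Module 𝕜 E]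

/-- The largest `δ` keeping `f - δ c` nonnegative on `s`: `δ = min {f x / c x | c x > 0}`. -/
theorem exists_forall_sub_mul_nonneg_and_exists_eq_zero {s : Finset α} {f c : α → 𝕜}
    (hf : ∀ x ∈ s, 0 < f x) (hc : ∃ x ∈ s, 0 < c x) :
    ∃ δ : 𝕜, (∀ x ∈ s, 0 ≤ f x - δ * c x) ∧ ∃ x ∈ s, f x - δ * c x = 0 := by
  obtain ⟨x₀, hx₀, hmin⟩ := (s.filter (0 < c ·)).exists_min_image (fun x => f x / c x)
    (by simpa [Finset.Nonempty] using hc)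
  rw [mem_filter] at hx₀
  refine ⟨f x₀ / c x₀, fun x hx => ?_, x₀, hx₀.1, by field_simp [hx₀.2.ne']; ring⟩
  rcases lt_or_ge 0 (c x) with hcx | hcx
  · have := hmin x (mem_filter.2 ⟨hx, hcx⟩)
    rw [le_div_iff₀ hcx] at this
    linarith
  · have : f x₀ / c x₀ * c x ≤ 0 :=
      mul_nonpos_of_nonneg_of_nonpos (div_nonneg (hf x₀ hx₀.1).le hx₀.2.le) hcx
    linarith [hf x hx]

/-- Shift the weights along a linear relation among the `φ x` until one of them vanishes. -/
theorem exists_ssubset_sum_smul_eq_of_not_linearIndepOn {φ : α → E} {s : Finset α}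
    (hs : ¬LinearIndepOn 𝕜 φ s) {f : α → 𝕜} (hf : ∀ x ∈ s, 0 < f x) :
    ∃ t ⊂ s, ∃ g : α → 𝕜, (∀ x ∈ t, 0 < g x) ∧ ∑ x ∈ t, g x • φ x = ∑ x ∈ s, f x • φ x := by
  obtain ⟨c, hc, x, hx, hcx⟩ := not_linearIndepOn_finset_iff.1 hs
  wlog hcx_pos : 0 < c x generalizing c
  · exact this (-c) (by simp [hc]) (by simpa using hcx)
      (by simpa using (not_lt.1 hcx_pos).lt_of_ne hcx)
  obtain ⟨δ, hnonneg, x₀, hx₀, hzero⟩ :=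
    exists_forall_sub_mul_nonneg_and_exists_eq_zero hf ⟨x, hx, hcx_pos⟩
  set g := fun x => f x - δ * c x
  have hsum : ∑ x ∈ s, g x • φ x = ∑ x ∈ s, f x • φ x := by
    simp only [g, sub_smul, mul_smul, sum_sub_distrib, ← smul_sum, hc, smul_zero, sub_zero]
  refine ⟨s.filter (0 < g ·), ?_, g, fun x hx => (mem_filter.1 hx).2, ?_⟩
  · exact filter_ssubset.2 ⟨x₀, hx₀, by simp [g, hzero]⟩
  · rw [sum_filter_of_ne fun x hx hgx => (hnonneg x hx).lt_of_ne' (left_ne_zero_of_smul hgx),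
      hsum]

/-- **Carathéodory's theorem** for cones. -/
theorem exists_subset_linearIndepOn_sum_smul_eq (φ : α → E) (s : Finset α) (f : α → 𝕜)
    (hf : ∀ x ∈ s, 0 < f x) :
    ∃ t ⊆ s, LinearIndepOn 𝕜 φ t ∧
      ∃ g : α → 𝕜, (∀ x ∈ t, 0 < g x) ∧ ∑ x ∈ t, g x • φ x = ∑ x ∈ s, f x • φ x := by
  induction s using Finset.strongInduction generalizing f with
  | H s ih =>
    by_cases hs : LinearIndepOn 𝕜 φ s
    · exact ⟨s, subset_rfl, hs, f, hf, rfl⟩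
    obtain ⟨t, hts, g, hg, hsum⟩ := exists_ssubset_sum_smul_eq_of_not_linearIndepOn hs hf
    obtain ⟨u, hut, hu, h, hh, hsum'⟩ := ih t hts g hg
    exact ⟨u, hut.trans hts.subset, hu, h, hh, hsum'.trans hsum⟩

theorem exists_subset_card_le_finrank_sum_smul_eq [FiniteDimensional 𝕜 E] (φ : α → E)
    (s : Finset α) (f : α → 𝕜) (hf : ∀ x ∈ s, 0 < f x) :
    ∃ t ⊆ s, #t ≤ finrank 𝕜 E ∧
      ∃ g : α → 𝕜, (∀ x ∈ t, 0 < g x) ∧ ∑ x ∈ t, g x • φ x = ∑ x ∈ s, f x • φ x := by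
  obtain ⟨t, hts, ht, g, hg, hsum⟩ := exists_subset_linearIndepOn_sum_smul_eq φ s f hf
  exact ⟨t, hts, (Fintype.card_coe t).symm.trans_le ht.fintype_card_le_finrank, g, hg, hsum⟩

/-- **Tchakaloff's theorem** for discrete measures. -/
theorem exists_subset_card_le_finrank_sum_mul_eq (V : Submodule 𝕜 (α → 𝕜))
    [FiniteDimensional 𝕜 V] (s : Finset α) (f : α → 𝕜) (hf : ∀ x ∈ s, 0 < f x) :
    ∃ t ⊆ s, #t ≤ finrank 𝕜 V ∧ ∃ g : α → 𝕜, (∀ x ∈ t, 0 < g x) ∧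
      ∀ u ∈ V, ∑ x ∈ t, g x * u x = ∑ x ∈ s, f x * u x := by
  obtain ⟨t, hts, hcard, g, hg, hsum⟩ := exists_subset_card_le_finrank_sum_smul_eq
    (fun x => (LinearMap.proj x).comp V.subtype : α → Module.Dual 𝕜 V) s f hf
  refine ⟨t, hts, hcard.trans_eq Subspace.dual_finrank_eq, g, hg, fun u hu => ?_⟩
  simpa using LinearMap.congr_fun hsum ⟨u, hu⟩

end ConeCaratheodory

local notation "ℝ³" => EuclideanSpace ℝ (Fin 3)

noncomputable section SphereMonomials

def monomialFun (a b c : ℕ) : ℝ³ → ℝ := fun x => x 0 ^ a * x 1 ^ b * x 2 ^ c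

/-- As `(i, j)` ranges over `{0, …, n}²` this enumerates the monomials `x^a y^b z^c` with
`c ≤ 1` and `a + b + c ≤ n`: those with `c = 0` for `i ≤ j`, those with `c = 1` for `j < i`. -/
def gridMonomial (i j : ℕ) : ℝ³ → ℝ :=
  if i ≤ j then monomialFun i (j - i) 0 else monomialFun j (i - 1 - j) 1

def reducedSpan (n : ℕ) : Submodule ℝ (ℝ³ → ℝ) :=
  Submodule.span ℝ (Set.range fun ij : Fin (n + 1) × Fin (n + 1) => gridMonomial ij.1 ij.2)

instance (n : ℕ) : FiniteDimensional ℝ (reducedSpan n) :=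
  FiniteDimensional.span_of_finite ℝ (Set.finite_range _)

theorem finrank_reducedSpan_le (n : ℕ) : finrank ℝ (reducedSpan n) ≤ (n + 1) ^ 2 :=
  (finrank_range_le_card _).trans_eq (by simp [sq])

theorem monomialFun_mem_reducedSpan {n a b c : ℕ} (hc : c ≤ 1) (h : a + b + c ≤ n) :
    monomialFun a b c ∈ reducedSpan n := by
  apply Submodule.subset_span
  interval_cases c
  · exact ⟨(⟨a, by omega⟩, ⟨a + b, by omega⟩), by simp [gridMonomial]⟩
  · exact ⟨(⟨a + b + 1, by omega⟩, ⟨a, by omega⟩), by simp [gridMonomial]⟩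

def restrictSphere : (ℝ³ → ℝ) →ₗ[ℝ] (sphere (0 : ℝ³) 1 → ℝ) :=
  LinearMap.funLeft ℝ ℝ Subtype.val

theorem sq_add_sq_add_sq_of_mem_sphere {x : ℝ³} (hx : x ∈ sphere (0 : ℝ³) 1) :
    x 0 ^ 2 + x 1 ^ 2 + x 2 ^ 2 = 1 := by
  have := EuclideanSpace.real_norm_sq_eq x
  rw [mem_sphere_zero_iff_norm.1 hx, Fin.sum_univ_three] at this
  linarith

theorem restrictSphere_monomialFun_add_two (a b c : ℕ) :
    restrictSphere (monomialFun a b (c + 2)) = restrictSphere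
      (monomialFun a b c - monomialFun (a + 2) b c - monomialFun a (b + 2) c) := by
  funext x
  simp only [restrictSphere, LinearMap.funLeft_apply, monomialFun, Pi.sub_apply]
  linear_combination (x.1 0 ^ a * x.1 1 ^ b * x.1 2 ^ c) * sq_add_sq_add_sq_of_mem_sphere x.2

theorem restrictSphere_monomialFun_mem_map {n a b c : ℕ} (h : a + b + c ≤ n) :
    restrictSphere (monomialFun a b c) ∈ (reducedSpan n).map restrictSphere := by
  induction c using Nat.strong_induction_on generalizing a b with
  | _ c ih =>
    match c, ih with
    | 0, _ | 1, _ => exact Submodule.mem_map_of_mem (monomialFun_mem_reducedSpan (by omega) h)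
    | c + 2, ih =>
      rw [restrictSphere_monomialFun_add_two, map_sub, map_sub]
      exact sub_mem (sub_mem (ih c (by omega) (by omega)) (ih c (by omega) (by omega)))
        (ih c (by omega) (by omega))

theorem eval_eq_sum_monomialFun (p : MvPolynomial (Fin 3) ℝ) :
    (fun x : ℝ³ => MvPolynomial.eval (fun i => x i) p) =
      ∑ d ∈ p.support, p.coeff d • monomialFun (d 0) (d 1) (d 2) := by
  funext x
  simp [MvPolynomial.eval_eq', Fin.prod_univ_three, monomialFun]

theorem restrictSphere_eval_mem_map {n : ℕ} {p : MvPolynomial (Fin 3) ℝ}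
    (hp : p.totalDegree ≤ n) :
    restrictSphere (fun x : ℝ³ => MvPolynomial.eval (fun i => x i) p) ∈
      (reducedSpan n).map restrictSphere := by
  rw [eval_eq_sum_monomialFun, map_sum]
  refine Submodule.sum_mem _ fun d hd => ?_
  rw [map_smul]
  refine Submodule.smul_mem _ _ (restrictSphere_monomialFun_mem_map ?_)
  have := MvPolynomial.le_totalDegree hd
  rw [Finsupp.sum_fintype _ _ fun _ => rfl, Fin.sum_univ_three] at this
  omega

end SphereMonomials

theorem caratheodory_tchakaloff_submesh_general
    (n : ℕ)
    (X : Finset (EuclideanSpace ℝ (Fin 3)))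
    (hX : ↑X ⊆ sphere (0 : EuclideanSpace ℝ (Fin 3)) 1)
    (w : EuclideanSpace ℝ (Fin 3) → ℝ) (hw : ∀ x ∈ X, 0 < w x) :
    ∃ Y : Finset (EuclideanSpace ℝ (Fin 3)), Y ⊆ X ∧ Y.card ≤ (n + 1) ^ 2 ∧
      ∃ v : EuclideanSpace ℝ (Fin 3) → ℝ, (∀ y ∈ Y, 0 < v y) ∧
        ∀ p : MvPolynomial (Fin 3) ℝ, p.totalDegree ≤ n →
          ∑ y ∈ Y, v y * MvPolynomial.eval (fun i => y i) p =
            ∑ x ∈ X, w x * MvPolynomial.eval (fun i => x i) p := by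
  obtain ⟨Y, hYX, hcard, v, hv, hsum⟩ :=
    exists_subset_card_le_finrank_sum_mul_eq (reducedSpan n) X w hw
  refine ⟨Y, hYX, hcard.trans (finrank_reducedSpan_le n), v, hv, fun p hp => ?_⟩
  obtain ⟨f, hf, hfp⟩ := Submodule.mem_map.1 (restrictSphere_eval_mem_map hp)
  have hpf : ∀ x ∈ X, MvPolynomial.eval (fun i => x i) p = f x :=
    fun x hx => (congrFun hfp ⟨x, hX hx⟩).symm
  calc ∑ y ∈ Y, v y * MvPolynomial.eval (fun i => y i) p = ∑ y ∈ Y, v y * f y :=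
        sum_congr rfl fun y hy => by rw [hpf y (hYX hy)]
    _ = ∑ x ∈ X, w x * f x := hsum f hf
    _ = ∑ x ∈ X, w x * MvPolynomial.eval (fun i => x i) p :=
        sum_congr rfl fun x hx => by rw [hpf x hx]

/-- Carathéodory–Tchakaloff subset extraction on `S^2`: any positively weighted finite set
`X ⊆ S^2` admits a subset `Y ⊆ X` of at most `(n+1)²` points with strictly positive weights
reproducing the weighted sums of all polynomials of total degree at most `n` over `X`. -/
theorem caratheodory_tchakaloff_submesh
    (n : ℕ) (hn : 0 < n)
    (X : Finset (EuclideanSpace ℝ (Fin 3)))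
    (hX : ↑X ⊆ sphere (0 : EuclideanSpace ℝ (Fin 3)) 1)
    (w : EuclideanSpace ℝ (Fin 3) → ℝ) (hw : ∀ x ∈ X, 0 < w x) :
    ∃ Y : Finset (EuclideanSpace ℝ (Fin 3)), Y ⊆ X ∧ Y.card ≤ (n + 1) ^ 2 ∧
      ∃ v : EuclideanSpace ℝ (Fin 3) → ℝ, (∀ y ∈ Y, 0 < v y) ∧
        ∀ p : MvPolynomial (Fin 3) ℝ, p.totalDegree ≤ n →
          ∑ y ∈ Y, v y * MvPolynomial.eval (fun i => y i) p =
            ∑ x ∈ X, w x * MvPolynomial.eval (fun i => x i) p :=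
  caratheodory_tchakaloff_submesh_general n X hX w hw
end
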